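/- arXiv:2512.08200 — 3 statements merged into one kernel-verified Lean document; each statement's English description precedes it below -/
import Mathlib

section
/- Let X, X_1, X_2, … be i.i.d. random vectors in ℝ^d with mean μ = E[X], let X̄_n = n^{-1} Σ_{i=1}^n X_i, and let λ ≥ 1. If E[‖X‖^{2λ}] < ∞, then for every fixed ε > 0, P( ‖X̄_n − μ‖ > ε ) = O(n^{-λ}) as n → ∞. -/
/-!
Centring the variables and passing to coordinates (`‖v‖ ≤ ∑ⱼ |vⱼ|`), it suffices to show
`P(nδ ≤ |W₁ + ⋯ + Wₙ|) = O(n^{-λ})` for i.i.d. real `Wᵢ` with mean zero and `E|W|^{2λ} < ∞`.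
For `λ = 1` this is Chebyshev's inequality. For `λ > 1` truncate at `M = n^a` with
`a = (1 + λ) / (2λ) < 1`. By Markov's inequality some `|Wᵢ| ≥ M` with probability at most
`n E|W|^{2λ} / M^{2λ} = E|W|^{2λ} n^{-λ}`. Truncation moves the mean by at most
`M^{1-2λ} E|W|^{2λ} → 0`, and the recentred truncations are bounded by `2M` with variance at most
`E W²`; with `eˣ ≤ 1 + x + x²` for `|x| ≤ 1` the Chernoff bound at `t = 1/(2M)` gives
`exp(-nδ/(8M)) = exp(-(δ/8) n^{1-a})`, which is `o(n^{-λ})`.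
-/

open MeasureTheory ProbabilityTheory Finset Filter Asymptotics Real Topology

lemma exp_le_one_add_add_sq {x : ℝ} (hx : |x| ≤ 1) : exp x ≤ 1 + x + x ^ 2 := by
  linarith [(abs_le.1 (abs_exp_sub_one_sub_id_le hx)).2]

lemma abs_sub_truncation_le {α : Type*} (f : α → ℝ) {p M : ℝ} (hp : 1 ≤ p) (hM : 0 < M)
    (x : α) : |f x - truncation f M x| ≤ M ^ (1 - p) * ‖f x‖ ^ p := by
  rcases lt_or_ge |f x| M with hlt | hle
  · rw [truncation_eq_self hlt, sub_self, abs_zero]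
    positivity
  have hx : |f x| ≠ 0 := (hM.trans_le hle).ne'
  calc |f x - truncation f M x| ≤ |f x| := by
        simp only [truncation, Set.indicator, Function.comp_apply, id]
        split_ifs <;> simp
    _ = M ^ (1 - p) * (M ^ (p - 1) * |f x|) := by
        rw [← mul_assoc, ← rpow_add hM]; simp
    _ ≤ M ^ (1 - p) * (|f x| ^ (p - 1) * |f x|) := by
        gcongr
    _ = M ^ (1 - p) * ‖f x‖ ^ p := by
        rw [← rpow_add_one hx, sub_add_cancel, Real.norm_eq_abs]

lemma setOf_sum_ge_subset_union_truncation {Ω : Type*} (W : ℕ → Ω → ℝ) {δ M c : ℝ} (hc : c ≤ δ / 2)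
    (n : ℕ) :
    {ω | n * δ ≤ ∑ i ∈ range n, W i ω} ⊆ (⋃ i ∈ range n, {ω | M ≤ ‖W i ω‖}) ∪
      {ω | n * δ / 2 ≤ ∑ i ∈ range n, (truncation (W i) M ω - c)} := by
  intro ω hω
  by_cases hbig : ∃ i ∈ range n, M ≤ ‖W i ω‖
  · obtain ⟨i, hi, hMi⟩ := hbig
    exact Or.inl (Set.mem_biUnion hi hMi)
  push Not at hbig
  have hsum : ∑ i ∈ range n, (truncation (W i) M ω - c) = ∑ i ∈ range n, W i ω - n * c := by
    rw [sum_sub_distrib, sum_congr rfl fun i hi => truncation_eq_self (hbig i hi)]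
    simp
  have hnc : n * c ≤ n * (δ / 2) := mul_le_mul_of_nonneg_left hc n.cast_nonneg
  simp only [Set.mem_union, Set.mem_ofPred_eq] at hω ⊢
  right
  rw [hsum]
  linarith

lemma lt_norm_inv_smul_sum_sub_iff {E : Type*} [NormedAddCommGroup E] [NormedSpace ℝ E]
    (x : ℕ → E) (μ : E) {n : ℕ} (hn : (0 : ℝ) < n) (ε : ℝ) :
    ε < ‖(n : ℝ)⁻¹ • (∑ i ∈ range n, x i) - μ‖ ↔ n * ε < ‖∑ i ∈ range n, (x i - μ)‖ := by
  have hsmul : (n : ℝ)⁻¹ • (∑ i ∈ range n, x i) - μ = (n : ℝ)⁻¹ • ∑ i ∈ range n, (x i - μ) := by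
    rw [sum_sub_distrib, sum_const, card_range, smul_sub, ← Nat.cast_smul_eq_nsmul ℝ, smul_smul,
      inv_mul_cancel₀ hn.ne', one_smul]
  rw [hsmul, norm_smul, norm_inv, RCLike.norm_natCast]
  exact lt_inv_mul_iff₀ hn

lemma isBigO_exp_neg_mul_natCast_rpow {c b : ℝ} (hc : 0 < c) (hb : 0 < b) (s : ℝ) :
    (fun n : ℕ => exp (-c * (n : ℝ) ^ b)) =O[atTop] fun n => (n : ℝ) ^ s := by
  refine ((isLittleO_exp_neg_mul_rpow_atTop hc (s / b)).comp_tendsto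
    ((tendsto_rpow_atTop hb).comp tendsto_natCast_atTop_atTop)).isBigO.congr'
    EventuallyEq.rfl (Eventually.of_forall fun n => ?_)
  simp only [Function.comp_apply]
  rw [← rpow_mul n.cast_nonneg, mul_div_cancel₀ _ hb.ne']

lemma EuclideanSpace.norm_le_sum_abs {ι : Type*} [Fintype ι] (v : EuclideanSpace ℝ ι) :
    ‖v‖ ≤ ∑ j, |v j| := by
  calc ‖v‖ = √(∑ j, ‖v j‖ ^ 2) := EuclideanSpace.norm_eq v
    _ ≤ √((∑ j, |v j|) ^ 2) := sqrt_le_sqrt <| by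
        simpa only [Real.norm_eq_abs, sq_abs] using
          sum_sq_le_sq_sum_of_nonneg (s := univ) fun j _ => abs_nonneg (v j)
    _ = ∑ j, |v j| := sqrt_sq (sum_nonneg fun j _ => abs_nonneg _)

lemma EuclideanSpace.exists_le_abs_apply_of_lt_norm {ι : Type*} [Fintype ι]
    {v : EuclideanSpace ℝ ι} {r : ℝ} (hr : 0 ≤ r) (h : r < ‖v‖) :
    ∃ j, r / (Fintype.card ι + 1) ≤ |v j| := by
  have hsum : ∑ _j : ι, r / (Fintype.card ι + 1) < ∑ j, |v j| := by
    refine lt_of_le_of_lt ?_ (h.trans_le (norm_le_sum_abs v))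
    rw [sum_const, card_univ, nsmul_eq_mul, ← mul_div_assoc, div_le_iff₀ (by positivity)]
    nlinarith
  obtain ⟨j, -, hj⟩ := exists_lt_of_sum_lt hsum
  exact ⟨j, hj.le⟩

section

variable {Ω : Type*} [MeasurableSpace Ω]

lemma measureReal_norm_ge_le_integral_rpow_div {E : Type*} [NormedAddCommGroup E]
    {μ : Measure Ω} [IsFiniteMeasure μ] {f : Ω → E} {p M : ℝ} (hp : 0 ≤ p) (hM : 0 < M)
    (hint : Integrable (fun ω => ‖f ω‖ ^ p) μ) :
    μ.real {ω | M ≤ ‖f ω‖} ≤ (∫ ω, ‖f ω‖ ^ p ∂μ) / M ^ p := by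
  have hsub : {ω | M ≤ ‖f ω‖} ⊆ {ω | M ^ p ≤ ‖f ω‖ ^ p} := fun ω hω =>
    rpow_le_rpow hM.le hω hp
  rw [le_div_iff₀' (rpow_pos_of_pos hM p)]
  calc M ^ p * μ.real {ω | M ≤ ‖f ω‖} ≤ M ^ p * μ.real {ω | M ^ p ≤ ‖f ω‖ ^ p} :=
        mul_le_mul_of_nonneg_left (measureReal_mono hsub) (by positivity)
    _ ≤ ∫ ω, ‖f ω‖ ^ p ∂μ :=
        mul_meas_ge_le_integral_of_nonneg (ae_of_all _ fun ω => by positivity) hint _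

lemma integrable_of_integrable_norm_rpow {E : Type*} [NormedAddCommGroup E] {μ : Measure Ω}
    [IsFiniteMeasure μ] {f : Ω → E} (hf : AEStronglyMeasurable f μ) {p : ℝ} (hp : 1 ≤ p)
    (hint : Integrable (fun ω => ‖f ω‖ ^ p) μ) : Integrable f μ := by
  simpa only [rpow_one, integrable_norm_iff hf] using
    integrable_norm_rpow_of_le hf zero_le_one (by linarith) hp hint

lemma integrable_norm_sub_const_rpow {E : Type*} [NormedAddCommGroup E]
    {μ : Measure Ω} [IsFiniteMeasure μ] {f : Ω → E} (hf : AEStronglyMeasurable f μ) {p : ℝ}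
    (hp : 0 ≤ p) (hint : Integrable (fun ω => ‖f ω‖ ^ p) μ) (c : E) :
    Integrable (fun ω => ‖f ω - c‖ ^ p) μ := by
  rcases hp.eq_or_lt with rfl | hp
  · simp
  rw [← ENNReal.toReal_ofReal hp.le, integrable_norm_rpow_iff hf (by simp [hp]) (by simp)]
    at hint
  simpa [ENNReal.toReal_ofReal hp.le] using
    (hint.sub (memLp_const c)).integrable_norm_rpow (by simp [hp]) (by simp)

lemma abs_integral_truncation_le {μ : Measure Ω} [IsFiniteMeasure μ] {f : Ω → ℝ}
    (hf : Integrable f μ) (hmean : ∫ ω, f ω ∂μ = 0) {p M : ℝ} (hp : 1 ≤ p) (hM : 0 < M)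
    (hmom : Integrable (fun ω => ‖f ω‖ ^ p) μ) :
    |∫ ω, truncation f M ω ∂μ| ≤ M ^ (1 - p) * ∫ ω, ‖f ω‖ ^ p ∂μ := by
  have htr : Integrable (truncation f M) μ := hf.1.integrable_truncation
  calc |∫ ω, truncation f M ω ∂μ| = |∫ ω, (f ω - truncation f M ω) ∂μ| := by
        rw [integral_sub hf htr, hmean, zero_sub, abs_neg]
    _ ≤ ∫ ω, |f ω - truncation f M ω| ∂μ := abs_integral_le_integral_abs
    _ ≤ ∫ ω, M ^ (1 - p) * ‖f ω‖ ^ p ∂μ :=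
        integral_mono (hf.sub htr).abs (hmom.const_mul _) (abs_sub_truncation_le f hp hM)
    _ = M ^ (1 - p) * ∫ ω, ‖f ω‖ ^ p ∂μ := integral_const_mul _ _

variable {P : Measure Ω} [IsProbabilityMeasure P]

lemma integrable_exp_mul_of_abs_le {U : Ω → ℝ} (hU : AEStronglyMeasurable U P) {K t : ℝ}
    (hbd : ∀ ω, |U ω| ≤ K) (ht : 0 ≤ t) (htK : t * K ≤ 1) :
    Integrable (fun ω => exp (t * U ω)) P := by
  refine Integrable.of_bound (continuous_exp.comp_aestronglyMeasurable (hU.const_mul t)) (exp 1)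
    (ae_of_all _ fun ω => ?_)
  rw [norm_of_nonneg (exp_pos _).le, exp_le_exp]
  calc t * U ω ≤ t * K := mul_le_mul_of_nonneg_left ((le_abs_self _).trans (hbd ω)) ht
    _ ≤ 1 := htK

lemma mgf_le_exp_sq_mul_integral_sq {U : Ω → ℝ} (hU : AEStronglyMeasurable U P) {K t : ℝ}
    (hbd : ∀ ω, |U ω| ≤ K) (ht : 0 ≤ t) (htK : t * K ≤ 1) (hmean : ∫ ω, U ω ∂P = 0) :
    mgf U P t ≤ exp (t ^ 2 * ∫ ω, U ω ^ 2 ∂P) := by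
  have hint : Integrable U P := Integrable.of_bound hU K (ae_of_all _ hbd)
  have hint2 : Integrable (fun ω => U ω ^ 2) P :=
    Integrable.of_bound (hU.pow 2) (K ^ 2) (ae_of_all _ fun ω => by
      rw [norm_pow, Real.norm_eq_abs]; exact pow_le_pow_left₀ (abs_nonneg _) (hbd ω) 2)
  have htU : ∀ ω, |t * U ω| ≤ 1 := fun ω => by
    rw [abs_mul, abs_of_nonneg ht]
    exact (mul_le_mul_of_nonneg_left (hbd ω) ht).trans htK
  calc mgf U P t ≤ ∫ ω, (1 + t * U ω + t ^ 2 * U ω ^ 2) ∂P :=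
        integral_mono_of_nonneg (ae_of_all _ fun ω => (exp_pos _).le)
          (((integrable_const 1).add (hint.const_mul t)).add (hint2.const_mul _))
          (ae_of_all _ fun ω => by linarith [exp_le_one_add_add_sq (htU ω)])
    _ = 1 + t ^ 2 * ∫ ω, U ω ^ 2 ∂P := by
        rw [integral_add (f := fun ω => 1 + t * U ω) ((integrable_const 1).add
            (hint.const_mul t)) (hint2.const_mul _),
          integral_add (f := fun _ => (1 : ℝ)) (integrable_const 1) (hint.const_mul t),
          integral_const_mul, integral_const_mul, hmean]
        simp
    _ ≤ exp (t ^ 2 * ∫ ω, U ω ^ 2 ∂P) := by linarith [add_one_le_exp (t ^ 2 * ∫ ω, U ω ^ 2 ∂P)]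

lemma measureReal_sum_ge_le_exp_of_abs_le {ι : Type*} {U : ι → Ω → ℝ}
    (hmeas : ∀ i, Measurable (U i)) (hindep : iIndepFun U P) {K t σ2 : ℝ} (hbd : ∀ i ω, |U i ω| ≤ K) (ht : 0 ≤ t)
    (htK : t * K ≤ 1) (hmean : ∀ i, ∫ ω, U i ω ∂P = 0) (hvar : ∀ i, ∫ ω, U i ω ^ 2 ∂P ≤ σ2)
    (s : Finset ι) (a : ℝ) :
    P.real {ω | a ≤ ∑ i ∈ s, U i ω} ≤ exp (-t * a + #s * (t ^ 2 * σ2)) := by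
  have hmgf : mgf (∑ i ∈ s, U i) P t ≤ exp (t ^ 2 * σ2) ^ #s := by
    rw [hindep.mgf_sum hmeas, ← Finset.prod_const]
    refine Finset.prod_le_prod (fun _ _ => mgf_nonneg) fun i _ => ?_
    refine (mgf_le_exp_sq_mul_integral_sq (hmeas i).aestronglyMeasurable (hbd i) ht htK
      (hmean i)).trans (exp_le_exp.2 ?_)
    exact mul_le_mul_of_nonneg_left (hvar i) (sq_nonneg t)
  have hint := hindep.integrable_exp_mul_sum hmeas (s := s) fun i _ =>
    integrable_exp_mul_of_abs_le (hmeas i).aestronglyMeasurable (hbd i) ht htK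
  calc P.real {ω | a ≤ ∑ i ∈ s, U i ω} = P.real {ω | a ≤ (∑ i ∈ s, U i) ω} := by
        simp only [Finset.sum_apply]
    _ ≤ exp (-t * a) * mgf (∑ i ∈ s, U i) P t := measure_ge_le_exp_mul_mgf a ht hint
    _ ≤ exp (-t * a) * exp (t ^ 2 * σ2) ^ #s := by gcongr
    _ = exp (-t * a + #s * (t ^ 2 * σ2)) := by rw [← exp_nat_mul, ← exp_add]

lemma variance_truncation_le {f : Ω → ℝ} (hf : AEStronglyMeasurable f P)
    (hf2 : Integrable (fun ω => f ω ^ 2) P) (M : ℝ) :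
    variance (truncation f M) P ≤ ∫ ω, f ω ^ 2 ∂P :=
  (variance_le_expectation_sq hf.truncation).trans <|
    integral_mono hf.memLp_truncation.integrable_sq hf2 fun _ =>
      sq_le_sq.2 (abs_truncation_le_abs_self _ _ _)

lemma measureReal_sum_truncation_sub_ge_le_exp {W : ℕ → Ω → ℝ} (hmeas : ∀ i, Measurable (W i))
    (hindep : iIndepFun W P) (hident : ∀ i, IdentDistrib (W i) (W 0) P P)
    (hW2 : Integrable (fun ω => W 0 ω ^ 2) P) {δ M : ℝ} (hM : 0 < M)
    (hvar : 2 * ∫ ω, W 0 ω ^ 2 ∂P ≤ δ * M) (n : ℕ) :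
    P.real {ω | n * δ / 2 ≤
        ∑ i ∈ range n, (truncation (W i) M ω - ∫ x, truncation (W 0) M x ∂P)} ≤
      exp (-(n * δ / (8 * M))) := by
  have hW0 : AEStronglyMeasurable (W 0) P := (hmeas 0).aestronglyMeasurable
  set c := ∫ ω, truncation (W 0) M ω ∂P
  have hcM : |c| ≤ M := by
    simpa only [Real.norm_eq_abs, probReal_univ, mul_one] using
      norm_integral_le_of_norm_le_const (μ := P) (f := truncation (W 0) M) (C := M)
        (ae_of_all _ fun ω => (abs_truncation_le_bound (W 0) M ω).trans (abs_of_pos hM).le)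
  have htr : Measurable (Set.indicator (Set.Ioc (-M) M) id) :=
    measurable_id.indicator measurableSet_Ioc
  have htr_ident : ∀ i, IdentDistrib (truncation (W i) M) (truncation (W 0) M) P P :=
    fun i => (hident i).comp htr
  have hU_bd : ∀ i ω, |truncation (W i) M ω - c| ≤ 2 * M := fun i ω => by
    have := abs_truncation_le_bound (W i) M ω
    rw [abs_of_pos hM] at this
    linarith [abs_sub (truncation (W i) M ω) c]
  have hU_mean : ∀ i, ∫ ω, (truncation (W i) M ω - c) ∂P = 0 := fun i => by
    rw [integral_sub (hmeas i).aestronglyMeasurable.integrable_truncation (integrable_const c),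
      (htr_ident i).integral_eq, integral_const, probReal_univ, one_smul, sub_self]
  have hU_var : ∀ i, ∫ ω, (truncation (W i) M ω - c) ^ 2 ∂P ≤ ∫ ω, W 0 ω ^ 2 ∂P := fun i =>
    calc ∫ ω, (truncation (W i) M ω - c) ^ 2 ∂P = ∫ ω, (truncation (W 0) M ω - c) ^ 2 ∂P :=
          ((htr_ident i).comp ((measurable_id.sub_const c).pow_const 2)).integral_eq
      _ = variance (truncation (W 0) M) P :=
          (variance_eq_integral hW0.truncation.aemeasurable).symm
      _ ≤ ∫ ω, W 0 ω ^ 2 ∂P := variance_truncation_le hW0 hW2 M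
  refine (measureReal_sum_ge_le_exp_of_abs_le (U := fun i ω => truncation (W i) M ω - c)
    (fun i => (htr.comp (hmeas i)).sub_const c)
    (hindep.comp (fun _ x => Set.indicator (Set.Ioc (-M) M) id x - c) fun _ => htr.sub_const c)
    hU_bd (t := 1 / (2 * M)) (by positivity) (one_div_mul_cancel (by positivity)).le hU_mean
    hU_var (range n) (n * δ / 2)).trans (exp_le_exp.2 ?_)
  have key : (n : ℝ) * (2 * ∫ ω, W 0 ω ^ 2 ∂P) ≤ n * (δ * M) :=
    mul_le_mul_of_nonneg_left hvar n.cast_nonneg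
  rw [card_range]
  field_simp
  nlinarith

lemma measureReal_sum_ge_le_of_truncation {W : ℕ → Ω → ℝ} (hmeas : ∀ i, Measurable (W i))
    (hindep : iIndepFun W P) (hident : ∀ i, IdentDistrib (W i) (W 0) P P)
    (hmean : ∫ ω, W 0 ω ∂P = 0) {p : ℝ} (hp : 2 ≤ p)
    (hmom : Integrable (fun ω => ‖W 0 ω‖ ^ p) P) {δ M : ℝ} (hM : 0 < M)
    (hvar : 2 * ∫ ω, W 0 ω ^ 2 ∂P ≤ δ * M)
    (hbias : M ^ (1 - p) * ∫ ω, ‖W 0 ω‖ ^ p ∂P ≤ δ / 2) (n : ℕ) :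
    P.real {ω | n * δ ≤ ∑ i ∈ range n, W i ω} ≤
      n * ((∫ ω, ‖W 0 ω‖ ^ p ∂P) / M ^ p) + exp (-(n * δ / (8 * M))) := by
  have hW0 : AEStronglyMeasurable (W 0) P := (hmeas 0).aestronglyMeasurable
  have hint : Integrable (W 0) P := integrable_of_integrable_norm_rpow hW0 (by linarith) hmom
  have hint2 : Integrable (fun ω => W 0 ω ^ 2) P := by
    simpa only [rpow_two, Real.norm_eq_abs, sq_abs] using
      integrable_norm_rpow_of_le hW0 zero_le_two (by linarith) hp hmom
  have hc : ∫ ω, truncation (W 0) M ω ∂P ≤ δ / 2 := (le_abs_self _).trans <|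
    (abs_integral_truncation_le hint hmean (by linarith) hM hmom).trans hbias
  have hmarkov : ∀ i, P.real {ω | M ≤ ‖W i ω‖} ≤ (∫ ω, ‖W 0 ω‖ ^ p ∂P) / M ^ p := fun i => by
    have h : P {ω | M ≤ ‖W i ω‖} = P {ω | M ≤ ‖W 0 ω‖} :=
      (hident i).measure_mem_eq (s := {x | M ≤ ‖x‖})
        (measurableSet_le measurable_const measurable_norm)
    rw [measureReal_def, h, ← measureReal_def]
    exact measureReal_norm_ge_le_integral_rpow_div (by linarith) hM hmom
  calc P.real {ω | n * δ ≤ ∑ i ∈ range n, W i ω}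
      ≤ P.real ((⋃ i ∈ range n, {ω | M ≤ ‖W i ω‖}) ∪ {ω | n * δ / 2 ≤
          ∑ i ∈ range n, (truncation (W i) M ω - ∫ x, truncation (W 0) M x ∂P)}) :=
        measureReal_mono (setOf_sum_ge_subset_union_truncation W hc n)
    _ ≤ ∑ i ∈ range n, P.real {ω | M ≤ ‖W i ω‖} + P.real {ω | n * δ / 2 ≤
          ∑ i ∈ range n, (truncation (W i) M ω - ∫ x, truncation (W 0) M x ∂P)} :=
        (measureReal_union_le _ _).trans (add_le_add_left (measureReal_biUnion_finset_le _ _) _)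
    _ ≤ ∑ i ∈ range n, (∫ ω, ‖W 0 ω‖ ^ p ∂P) / M ^ p + exp (-(n * δ / (8 * M))) :=
        add_le_add (sum_le_sum fun i _ => hmarkov i)
          (measureReal_sum_truncation_sub_ge_le_exp hmeas hindep hident hint2 hM hvar n)
    _ = n * ((∫ ω, ‖W 0 ω‖ ^ p ∂P) / M ^ p) + exp (-(n * δ / (8 * M))) := by simp

lemma isBigO_measureReal_sum_ge_of_one_lt {W : ℕ → Ω → ℝ} (hmeas : ∀ i, Measurable (W i))
    (hindep : iIndepFun W P) (hident : ∀ i, IdentDistrib (W i) (W 0) P P)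
    (hmean : ∫ ω, W 0 ω ∂P = 0) {lam : ℝ} (hlam : 1 < lam)
    (hmom : Integrable (fun ω => ‖W 0 ω‖ ^ (2 * lam)) P) {δ : ℝ} (hδ : 0 < δ) :
    (fun n : ℕ => P.real {ω | n * δ ≤ ∑ i ∈ range n, W i ω}) =O[atTop]
      fun n => (n : ℝ) ^ (-lam) := by
  set A := ∫ ω, ‖W 0 ω‖ ^ (2 * lam) ∂P with hA
  set σ2 := ∫ ω, W 0 ω ^ 2 ∂P
  set a := (1 + lam) / (2 * lam)
  have ha : 0 < a := by positivity
  have ha1 : a < 1 := by rw [div_lt_one (by positivity)]; linarith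
  have h2a : a * (2 * lam) = 1 + lam := div_mul_cancel₀ _ (by positivity)
  have hM : Tendsto (fun n : ℕ => (n : ℝ) ^ a) atTop atTop :=
    (tendsto_rpow_atTop ha).comp tendsto_natCast_atTop_atTop
  have hvar : ∀ᶠ n : ℕ in atTop, 2 * σ2 ≤ δ * (n : ℝ) ^ a := by
    filter_upwards [hM.eventually_ge_atTop (2 * σ2 / δ)] with n hn
    rwa [div_le_iff₀' hδ] at hn
  have hbias : ∀ᶠ n : ℕ in atTop, ((n : ℝ) ^ a) ^ (1 - 2 * lam) * A ≤ δ / 2 := by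
    have h : Tendsto (fun x : ℝ => x ^ (1 - 2 * lam) * A) atTop (𝓝 0) := by
      simpa [neg_sub] using (tendsto_rpow_neg_atTop (y := 2 * lam - 1) (by linarith)).mul_const A
    exact (h.comp hM).eventually (ge_mem_nhds (by positivity))
  have hbound : ∀ᶠ n : ℕ in atTop, P.real {ω | n * δ ≤ ∑ i ∈ range n, W i ω} ≤
      A * (n : ℝ) ^ (-lam) + exp (-(δ / 8) * (n : ℝ) ^ (1 - a)) := by
    filter_upwards [hvar, hbias, eventually_gt_atTop 0] with n hv hb hn
    have hn' : (0 : ℝ) < n := by exact_mod_cast hn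
    have hmarkov : (n : ℝ) * (A / ((n : ℝ) ^ a) ^ (2 * lam)) = A * (n : ℝ) ^ (-lam) := by
      rw [← rpow_mul hn'.le, h2a, rpow_add hn', rpow_one, rpow_neg hn'.le]
      field_simp
    have hexponent : -(n * δ / (8 * (n : ℝ) ^ a)) = -(δ / 8) * (n : ℝ) ^ (1 - a) := by
      rw [rpow_sub hn', rpow_one]
      field_simp
    have h := measureReal_sum_ge_le_of_truncation hmeas hindep hident hmean (by linarith) hmom
      (rpow_pos_of_pos hn' a) hv hb n
    rwa [← hA, hmarkov, hexponent] at h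
  refine (IsBigO.of_bound' (hbound.mono fun n hn => ?_)).trans
    (((isBigO_refl _ _).const_mul_left A).add
      (isBigO_exp_neg_mul_natCast_rpow (c := δ / 8) (b := 1 - a) (by positivity) (by linarith) _))
  rw [norm_of_nonneg measureReal_nonneg, norm_of_nonneg (by positivity)]
  exact hn

lemma isBigO_measureReal_abs_sum_ge_inv {W : ℕ → Ω → ℝ}
    (hindep : iIndepFun W P) (hident : ∀ i, IdentDistrib (W i) (W 0) P P)
    (hmean : ∫ ω, W 0 ω ∂P = 0) (hW : MemLp (W 0) 2 P) {δ : ℝ} (hδ : 0 < δ) :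
    (fun n : ℕ => P.real {ω | n * δ ≤ |∑ i ∈ range n, W i ω|}) =O[atTop]
      fun n => (n : ℝ)⁻¹ := by
  have hL2 : ∀ i, MemLp (W i) 2 P := fun i => (hident i).memLp_iff.2 hW
  refine IsBigO.of_bound (variance (W 0) P / δ ^ 2) ((eventually_gt_atTop 0).mono fun n hn => ?_)
  have hn' : (0 : ℝ) < n := by exact_mod_cast hn
  have hS : MemLp (∑ i ∈ range n, W i) 2 P := memLp_finsetSum' _ fun i _ => hL2 i
  have hES : ∫ ω, ∑ i ∈ range n, W i ω ∂P = 0 := by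
    rw [integral_finsetSum _ fun i _ => (hL2 i).integrable one_le_two]
    exact sum_eq_zero fun i _ => (hident i).integral_eq.trans hmean
  have hVar : variance (∑ i ∈ range n, W i) P = n * variance (W 0) P := by
    rw [IndepFun.variance_sum (fun i _ => hL2 i) fun i _ j _ hij => hindep.indepFun hij,
      sum_congr rfl fun i _ => (hident i).variance_eq]
    simp
  have hcheb := meas_ge_le_variance_div_sq hS (c := n * δ) (by positivity)
  simp only [hES, sub_zero, Finset.sum_apply, hVar] at hcheb
  rw [norm_of_nonneg measureReal_nonneg, norm_inv, RCLike.norm_natCast, measureReal_def]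
  have := variance_nonneg (W 0) P
  refine ENNReal.toReal_le_of_le_ofReal (by positivity) (hcheb.trans_eq ?_)
  congr 1
  field_simp

lemma isBigO_measureReal_abs_sum_ge {W : ℕ → Ω → ℝ} (hmeas : ∀ i, Measurable (W i))
    (hindep : iIndepFun W P) (hident : ∀ i, IdentDistrib (W i) (W 0) P P)
    (hmean : ∫ ω, W 0 ω ∂P = 0) {lam : ℝ} (hlam : 1 ≤ lam)
    (hmom : Integrable (fun ω => ‖W 0 ω‖ ^ (2 * lam)) P) {δ : ℝ} (hδ : 0 < δ) :
    (fun n : ℕ => P.real {ω | n * δ ≤ |∑ i ∈ range n, W i ω|}) =O[atTop]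
      fun n => (n : ℝ) ^ (-lam) := by
  rcases hlam.eq_or_lt with rfl | hlt
  · have hW : MemLp (W 0) 2 P := by
      rw [← integrable_norm_rpow_iff (hmeas 0).aestronglyMeasurable two_ne_zero
        ENNReal.ofNat_ne_top]
      simpa using hmom
    simpa only [rpow_neg_one] using isBigO_measureReal_abs_sum_ge_inv hindep hident hmean hW hδ
  have hneg := isBigO_measureReal_sum_ge_of_one_lt (W := fun i ω => -W i ω)
    (fun i => (hmeas i).neg) (hindep.comp (fun _ => Neg.neg) fun _ => measurable_neg)
    (fun i => (hident i).comp measurable_neg) (by simp [integral_neg, hmean]) hlt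
    (by simpa using hmom) hδ
  refine (IsBigO.of_bound' (Eventually.of_forall fun n => ?_)).trans
    ((isBigO_measureReal_sum_ge_of_one_lt hmeas hindep hident hmean hlt hmom hδ).add hneg)
  rw [norm_of_nonneg measureReal_nonneg,
    norm_of_nonneg (add_nonneg measureReal_nonneg measureReal_nonneg)]
  refine (measureReal_mono fun ω hω => ?_).trans (measureReal_union_le _ _)
  simp only [Set.mem_union, Set.mem_ofPred_eq, sum_neg_distrib] at hω ⊢
  exact le_abs.1 hω

lemma isBigO_measureReal_norm_sum_gt {ι : Type*} [Fintype ι] {Y : ℕ → Ω → EuclideanSpace ℝ ι}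
    (hmeas : ∀ i, Measurable (Y i)) (hindep : iIndepFun Y P)
    (hident : ∀ i, IdentDistrib (Y i) (Y 0) P P) (hmean : ∫ ω, Y 0 ω ∂P = 0) {lam : ℝ}
    (hlam : 1 ≤ lam) (hmom : Integrable (fun ω => ‖Y 0 ω‖ ^ (2 * lam)) P) {ε : ℝ}
    (hε : 0 < ε) :
    (fun n : ℕ => P.real {ω | n * ε < ‖∑ i ∈ range n, Y i ω‖}) =O[atTop]
      fun n => (n : ℝ) ^ (-lam) := by
  set δ := ε / (Fintype.card ι + 1)
  have hint : Integrable (Y 0) P :=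
    integrable_of_integrable_norm_rpow (hmeas 0).aestronglyMeasurable (by linarith) hmom
  have hcoord : ∀ j : ι, Measurable fun v : EuclideanSpace ℝ ι => v j := fun j =>
    (EuclideanSpace.proj j).continuous.measurable
  have hmomj : ∀ j, Integrable (fun ω => ‖Y 0 ω j‖ ^ (2 * lam)) P := fun j =>
    hmom.mono' (((hcoord j).comp (hmeas 0)).norm.pow_const _).aestronglyMeasurable
      (ae_of_all _ fun ω => by
        rw [norm_of_nonneg (by positivity)]
        exact rpow_le_rpow (norm_nonneg _) (PiLp.norm_apply_le _ _) (by linarith))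
  have hj : ∀ j, (fun n : ℕ => P.real {ω | n * δ ≤ |∑ i ∈ range n, Y i ω j|}) =O[atTop]
      fun n => (n : ℝ) ^ (-lam) := fun j =>
    isBigO_measureReal_abs_sum_ge (W := fun i ω => Y i ω j) (fun i => (hcoord j).comp (hmeas i))
      (hindep.comp (fun _ v => v j) fun _ => hcoord j) (fun i => (hident i).comp (hcoord j))
      (by simpa [hmean] using (EuclideanSpace.proj j).integral_comp_comm hint) hlam (hmomj j)
      (by positivity)
  refine (IsBigO.of_bound' (Eventually.of_forall fun n => ?_)).trans
    (IsBigO.fun_sum (s := univ) fun j _ => hj j)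
  rw [norm_of_nonneg measureReal_nonneg,
    norm_of_nonneg (sum_nonneg fun _ _ => measureReal_nonneg)]
  refine (measureReal_mono fun ω hω => ?_).trans (measureReal_iUnion_fintype_le _)
  obtain ⟨j, hj⟩ := EuclideanSpace.exists_le_abs_apply_of_lt_norm (by positivity) hω
  rw [WithLp.ofLp_sum, Finset.sum_apply, mul_div_assoc] at hj
  exact Set.mem_iUnion.2 ⟨j, hj⟩

end

/-- Let `X, X₁, X₂, …` be i.i.d. random vectors in `ℝ^d` with mean `μ = E[X]`
and `E[‖X‖^{2λ}] < ∞` for some real `λ ≥ 1`.  Then for every fixed `ε > 0`,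
`P(‖X̄ₙ − μ‖ > ε) = O(n^{-λ})` as `n → ∞`, where `X̄ₙ = n⁻¹ ∑_{i=1}^n Xᵢ`. -/
theorem stmt_2 {Ω : Type*} [MeasurableSpace Ω] (P : Measure Ω) [IsProbabilityMeasure P]
    (d : ℕ) (X : ℕ → Ω → EuclideanSpace ℝ (Fin d))
    (hmeas : ∀ i, Measurable (X i))
    (hindep : iIndepFun X P)
    (hident : ∀ i, IdentDistrib (X i) (X 0) P P)
    (lam : ℝ) (hlam : 1 ≤ lam)
    (hmom : Integrable (fun ω => ‖X 0 ω‖ ^ (2 * lam)) P)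
    (μ : EuclideanSpace ℝ (Fin d)) (hμ : μ = ∫ ω, X 0 ω ∂P)
    (ε : ℝ) (hε : 0 < ε) :
    ∃ C : ℝ, ∀ n : ℕ, 1 ≤ n →
      P {ω | ε < ‖(n : ℝ)⁻¹ • (∑ i ∈ Finset.range n, X i ω) - μ‖}
        ≤ ENNReal.ofReal (C * (n : ℝ) ^ (-lam)) := by
  have hX0 : AEStronglyMeasurable (X 0) P := (hmeas 0).aestronglyMeasurable
  have hcenter : Measurable fun v : EuclideanSpace ℝ (Fin d) => v - μ := measurable_id.sub_const μ
  obtain ⟨C, -, hC⟩ := bound_of_isBigO_nat_atTop <|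
    isBigO_measureReal_norm_sum_gt (Y := fun i ω => X i ω - μ) (fun i => hcenter.comp (hmeas i))
      (hindep.comp (fun _ => _) fun _ => hcenter) (fun i => (hident i).comp hcenter)
      (by rw [integral_sub (integrable_of_integrable_norm_rpow hX0 (by linarith) hmom)
        (integrable_const μ), ← hμ, integral_const, probReal_univ, one_smul, sub_self])
      hlam (integrable_norm_sub_const_rpow hX0 (by linarith) hmom μ) hε
  refine ⟨C, fun n hn => ?_⟩
  have hn' : (0 : ℝ) < n := by exact_mod_cast hn
  have hbound := hC (rpow_pos_of_pos hn' (-lam)).ne'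
  rw [norm_of_nonneg measureReal_nonneg, norm_of_nonneg (rpow_pos_of_pos hn' _).le] at hbound
  have hset : {ω | ε < ‖(n : ℝ)⁻¹ • (∑ i ∈ range n, X i ω) - μ‖} =
      {ω | n * ε < ‖∑ i ∈ range n, (X i ω - μ)‖} :=
    Set.ext fun ω => lt_norm_inv_smul_sum_sub_iff (fun i => X i ω) μ hn' ε
  rw [hset, ← ofReal_measureReal]
  exact ENNReal.ofReal_le_ofReal hbound
end

section
/- Let X, X_1, X_2, … be i.i.d. random vectors in ℝ^d, let X̄_n = n^{-1} Σ_{i=1}^n X_i, let V̂_n = n^{-1} Σ_{i=1}^n (X_i − X̄_n)(X_i − X̄_n)ᵀ be the sample covariance matrix, and let V_0 = Cov(X) be the population covariance matrix. Let λ > 1 and suppose E[‖X‖^{4λ}] < ∞. If C_3 > 1 is such that λ_max(V_0) ≤ C_3/2 and λ_min(V_0) ≥ 2/C_3, then P( λ_max(V̂_n) > C_3 or λ_min(V̂_n) < C_3^{-1} ) = O(n^{-λ}) as n → ∞. -/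
/-!
Entrywise, `V̂ₙ - V₀` is a continuous function of three sample means (of `XᵢXⱼ`, `Xᵢ`, `Xⱼ`),
vanishing at the population means, and moving every entry of a matrix by at most `δ` moves
`λ_max` and `λ_min` by at most `dδ`. So it suffices that the sample mean `Ȳₙ` of i.i.d. real
variables with `E|Y|^{2λ} < ∞` satisfies `P(|Ȳₙ - EY| ≥ ε) = O(n^{-λ})`; the products `XᵢXⱼ` have
`2λ` moments by Hölder.

That bound is a Fuk–Nagaev argument. Truncate at `a = cn`: some `Yₖ` exceeds `a` with
probability at most `n E|Y|^{2λ} / a^{2λ} = O(n^{1-2λ})`. Since `eʸ ≤ 1 + y + y² e^{ta}` for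
`y ≤ ta`, the truncated variables have `E e^{t min(Y, a)} ≤ exp(t EY + t² e^{ta} EY²)`, and the
Chernoff bound with `t = (2λ/ε) log n / n`, for which `e^{ta} = √n`, is at most `n^{-λ}`.
-/

open MeasureTheory ProbabilityTheory Matrix BigOperators Finset

/-- The smallest eigenvalue of a symmetric real matrix, characterized as the
infimum of the Rayleigh quotient over unit vectors (Courant–Fischer). -/
noncomputable def lambdaMin {d : ℕ} (A : Matrix (Fin d) (Fin d) ℝ) : ℝ :=
  sInf {r : ℝ | ∃ u : Fin d → ℝ, (∑ i, u i ^ 2) = 1 ∧ r = u ⬝ᵥ (A *ᵥ u)}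

/-- The largest eigenvalue of a symmetric real matrix, characterized as the
supremum of the Rayleigh quotient over unit vectors (Courant–Fischer). -/
noncomputable def lambdaMax {d : ℕ} (A : Matrix (Fin d) (Fin d) ℝ) : ℝ :=
  sSup {r : ℝ | ∃ u : Fin d → ℝ, (∑ i, u i ^ 2) = 1 ∧ r = u ⬝ᵥ (A *ᵥ u)}

/-- The sample covariance matrix `V̂ₙ = n⁻¹ ∑_{i=1}^n (Xᵢ − X̄ₙ)(Xᵢ − X̄ₙ)ᵀ`
of the sample `X₁(ω), …, Xₙ(ω)`, where `X̄ₙ = n⁻¹ ∑_{i=1}^n Xᵢ`. -/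
noncomputable def sampleCov {Ω : Type*} {d : ℕ} (X : ℕ → Ω → (Fin d → ℝ))
    (n : ℕ) (ω : Ω) : Matrix (Fin d) (Fin d) ℝ :=
  (n : ℝ)⁻¹ • ∑ i ∈ Finset.range n,
    vecMulVec (X i ω - (n : ℝ)⁻¹ • ∑ j ∈ Finset.range n, X j ω)
              (X i ω - (n : ℝ)⁻¹ • ∑ j ∈ Finset.range n, X j ω)

open Filter Asymptotics

lemma exp_le_one_add_add_sq_mul_exp {y b : ℝ} (hyb : y ≤ b) (hb : 0 ≤ b) :
    Real.exp y ≤ 1 + y + y ^ 2 * Real.exp b := by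
  have hexp_b : 1 ≤ Real.exp b := Real.one_le_exp hb
  rcases le_or_gt |y| 1 with hy | hy
  · nlinarith [(abs_le.1 (Real.abs_exp_sub_one_sub_id_le hy)).2, sq_nonneg y]
  rcases lt_abs.1 hy with hy | hy
  · nlinarith [Real.exp_le_exp.2 hyb,
      mul_le_mul_of_nonneg_right (show 1 ≤ y ^ 2 by nlinarith) (Real.exp_pos b).le]
  · nlinarith [Real.exp_le_one_iff.2 (show y ≤ 0 by linarith)]

lemma abs_dotProduct_mulVec_le {ι : Type*} [Fintype ι] {M : Matrix ι ι ℝ} {δ : ℝ}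
    (hM : ∀ i j, |M i j| ≤ δ) (u : ι → ℝ) :
    |u ⬝ᵥ (M *ᵥ u)| ≤ Fintype.card ι * δ * ∑ i, u i ^ 2 := by
  rcases isEmpty_or_nonempty ι with hι | ⟨⟨i₀⟩⟩
  · simp
  have hδ : 0 ≤ δ := (abs_nonneg _).trans (hM i₀ i₀)
  calc |u ⬝ᵥ (M *ᵥ u)| = |∑ i, ∑ j, u i * M i j * u j| := by
        simp [dotProduct, mulVec, Finset.mul_sum, mul_assoc]
    _ ≤ ∑ i, ∑ j, δ * (|u i| * |u j|) := by
        refine (abs_sum_le_sum_abs _ _).trans (sum_le_sum fun i _ =>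
          (abs_sum_le_sum_abs _ _).trans (sum_le_sum fun j _ => ?_))
        rw [abs_mul, abs_mul]
        nlinarith [hM i j, abs_nonneg (u i), abs_nonneg (u j),
          mul_nonneg (abs_nonneg (u i)) (abs_nonneg (u j))]
    _ = δ * (∑ i, |u i|) ^ 2 := by rw [sq, sum_mul_sum, mul_sum]; simp_rw [mul_sum]
    _ ≤ δ * (Fintype.card ι * ∑ i, |u i| ^ 2) := by
        gcongr
        simpa using sq_sum_le_card_mul_sum_sq (s := univ) (f := fun i => |u i|)
    _ = Fintype.card ι * δ * ∑ i, u i ^ 2 := by simp_rw [sq_abs]; ring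

-- `lambdaMax A` and `lambdaMin A` are, by definition, the `sSup` and `sInf` of this set.
def numericalRange {d : ℕ} (A : Matrix (Fin d) (Fin d) ℝ) : Set ℝ :=
  {r : ℝ | ∃ u : Fin d → ℝ, (∑ i, u i ^ 2) = 1 ∧ r = u ⬝ᵥ (A *ᵥ u)}

section NumericalRange

variable {d : ℕ} (A : Matrix (Fin d) (Fin d) ℝ)

lemma numericalRange_nonempty (hd : 0 < d) : (numericalRange A).Nonempty := by
  classical
  exact ⟨_, Pi.single ⟨0, hd⟩ 1, by simp [Pi.single_apply], rfl⟩

lemma exists_forall_mem_numericalRange_abs_le : ∃ C, ∀ r ∈ numericalRange A, |r| ≤ C := by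
  obtain ⟨δ, hδ⟩ := Finite.exists_le fun p : Fin d × Fin d => |A p.1 p.2|
  refine ⟨d * δ, ?_⟩
  rintro _ ⟨u, hu, rfl⟩
  simpa [hu] using abs_dotProduct_mulVec_le (fun i j => hδ (i, j)) u

lemma dotProduct_mulVec_le_lambdaMax {u : Fin d → ℝ} (hu : ∑ i, u i ^ 2 = 1) :
    u ⬝ᵥ (A *ᵥ u) ≤ lambdaMax A := by
  obtain ⟨C, hC⟩ := exists_forall_mem_numericalRange_abs_le A
  exact le_csSup ⟨C, fun r hr => (abs_le.1 (hC r hr)).2⟩ ⟨u, hu, rfl⟩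

lemma lambdaMin_le_dotProduct_mulVec {u : Fin d → ℝ} (hu : ∑ i, u i ^ 2 = 1) :
    lambdaMin A ≤ u ⬝ᵥ (A *ᵥ u) := by
  obtain ⟨C, hC⟩ := exists_forall_mem_numericalRange_abs_le A
  exact csInf_le ⟨-C, fun r hr => (abs_le.1 (hC r hr)).1⟩ ⟨u, hu, rfl⟩

variable {A} {B : Matrix (Fin d) (Fin d) ℝ} {δ : ℝ}

lemma abs_dotProduct_mulVec_sub_le (h : ∀ i j, |A i j - B i j| ≤ δ) {u : Fin d → ℝ}
    (hu : ∑ i, u i ^ 2 = 1) : |u ⬝ᵥ (A *ᵥ u) - u ⬝ᵥ (B *ᵥ u)| ≤ d * δ := by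
  simpa [sub_mulVec, dotProduct_sub, hu] using abs_dotProduct_mulVec_le (M := A - B) h u

lemma lambdaMax_le_lambdaMax_add (hd : 0 < d) (h : ∀ i j, |A i j - B i j| ≤ δ) :
    lambdaMax A ≤ lambdaMax B + d * δ := by
  refine csSup_le (numericalRange_nonempty A hd) ?_
  rintro _ ⟨u, hu, rfl⟩
  linarith [(abs_le.1 (abs_dotProduct_mulVec_sub_le h hu)).2,
    dotProduct_mulVec_le_lambdaMax B hu]

lemma lambdaMin_sub_le_lambdaMin (hd : 0 < d) (h : ∀ i j, |A i j - B i j| ≤ δ) :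
    lambdaMin B - d * δ ≤ lambdaMin A := by
  refine le_csInf (numericalRange_nonempty A hd) ?_
  rintro _ ⟨u, hu, rfl⟩
  linarith [(abs_le.1 (abs_dotProduct_mulVec_sub_le h hu)).1,
    lambdaMin_le_dotProduct_mulVec B hu]

end NumericalRange

lemma lambdaMin_of_fin_zero (A : Matrix (Fin 0) (Fin 0) ℝ) : lambdaMin A = 0 := by
  simp [lambdaMin]

lemma sampleCov_apply {Ω : Type*} {d : ℕ} (X : ℕ → Ω → (Fin d → ℝ)) (n : ℕ) (ω : Ω)
    (i j : Fin d) :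
    sampleCov X n ω i j
      = (n : ℝ)⁻¹ * ∑ k ∈ range n, X k ω i * X k ω j
        - ((n : ℝ)⁻¹ * ∑ k ∈ range n, X k ω i) * ((n : ℝ)⁻¹ * ∑ k ∈ range n, X k ω j) := by
  rcases Nat.eq_zero_or_pos n with rfl | hn
  · simp [sampleCov]
  have hn : (n : ℝ) ≠ 0 := by positivity
  have hmean : ∀ l, ((n : ℝ)⁻¹ • ∑ k ∈ range n, X k ω) l = (n : ℝ)⁻¹ * ∑ k ∈ range n, X k ω l := by
    simp [Finset.sum_apply]
  simp only [sampleCov, Matrix.smul_apply, Matrix.sum_apply, vecMulVec_apply, Pi.sub_apply, hmean,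
    smul_eq_mul, sub_mul, mul_sub, sum_sub_distrib, ← sum_mul, ← mul_sum, sum_const, card_range,
    nsmul_eq_mul]
  field_simp
  ring

lemma exists_pos_abs_sub_mul_sub_lt (a b c : ℝ) {δ : ℝ} (hδ : 0 < δ) :
    ∃ η > 0, ∀ x y z : ℝ, |x - a| < η → |y - b| < η → |z - c| < η →
      |(x - y * z) - (a - b * c)| < δ := by
  obtain ⟨η, hη, h⟩ := Metric.continuous_iff.1
    (by fun_prop : Continuous fun p : ℝ × ℝ × ℝ => p.1 - p.2.1 * p.2.2) (a, b, c) δ hδ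
  refine ⟨η, hη, fun x y z hx hy hz => ?_⟩
  have := h (x, y, z) (by simp [Prod.dist_eq, Real.dist_eq, hx, hy, hz])
  rwa [Real.dist_eq] at this

section Tail

variable {Ω : Type*} [MeasurableSpace Ω] {P : Measure Ω}

lemma isBigO_measureReal_of_subset_union [IsFiniteMeasure P] {α : Type*} {l : Filter α} {g : α → ℝ}
    {s t u : α → Set Ω} (h : ∀ x, s x ⊆ t x ∪ u x)
    (ht : (fun x => P.real (t x)) =O[l] g) (hu : (fun x => P.real (u x)) =O[l] g) :
    (fun x => P.real (s x)) =O[l] g := by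
  refine (isBigO_of_le l fun x => ?_).trans (ht.add hu)
  rw [Real.norm_of_nonneg measureReal_nonneg,
    Real.norm_of_nonneg (add_nonneg measureReal_nonneg measureReal_nonneg)]
  exact (measureReal_mono (h x)).trans (measureReal_union_le _ _)

lemma isBigO_measureReal_of_subset_iUnion [IsFiniteMeasure P] {α ι : Type*} [Fintype ι]
    {l : Filter α} {g : α → ℝ} {s : α → Set Ω} {t : ι → α → Set Ω} (h : ∀ x, s x ⊆ ⋃ i, t i x)
    (ht : ∀ i, (fun x => P.real (t i x)) =O[l] g) :
    (fun x => P.real (s x)) =O[l] g := by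
  refine (isBigO_of_le l fun x => ?_).trans (IsBigO.sum (s := univ) fun i _ => ht i)
  rw [Real.norm_of_nonneg measureReal_nonneg, Finset.sum_apply,
    Real.norm_of_nonneg (sum_nonneg fun _ _ => measureReal_nonneg)]
  exact (measureReal_mono (h x)).trans (measureReal_iUnion_fintype_le _)

lemma measureReal_lt_le_integral_rpow_div [IsFiniteMeasure P] {Y : Ω → ℝ} {p : ℝ} (hp : 0 < p)
    (hY : Integrable (fun ω => |Y ω| ^ p) P) {a : ℝ} (ha : 0 < a) :
    P.real {ω | a < Y ω} ≤ (∫ ω, |Y ω| ^ p ∂P) / a ^ p := by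
  have hap : 0 < a ^ p := Real.rpow_pos_of_pos ha p
  have hsub : {ω | a < Y ω} ⊆ {ω | a ^ p ≤ |Y ω| ^ p} := fun ω hω =>
    Real.rpow_le_rpow ha.le ((le_of_lt hω).trans (le_abs_self _)) hp.le
  rw [le_div_iff₀ hap, mul_comm]
  exact (mul_le_mul_of_nonneg_left (measureReal_mono hsub) hap.le).trans
    (mul_meas_ge_le_integral_of_nonneg (ae_of_all _ fun ω => by positivity) hY _)

lemma memLp_apply_of_integrable_sqrt_sum_sq_rpow {d : ℕ} {Z : Ω → Fin d → ℝ} (hZ : Measurable Z)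
    {p : ℝ} (hp : 0 < p) (h : Integrable (fun ω => √(∑ i, Z ω i ^ 2) ^ p) P) (i : Fin d) :
    MemLp (fun ω => Z ω i) (ENNReal.ofReal p) P := by
  have hnorm : MemLp (fun ω => √(∑ i, Z ω i ^ 2)) (ENNReal.ofReal p) P := by
    refine (integrable_norm_rpow_iff (by fun_prop) (ENNReal.ofReal_pos.2 hp).ne'
      ENNReal.ofReal_ne_top).1 ?_
    simpa only [Real.norm_of_nonneg (Real.sqrt_nonneg _), ENNReal.toReal_ofReal hp.le] using h
  refine hnorm.of_le ((measurable_pi_apply i).comp hZ).aestronglyMeasurable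
    (ae_of_all _ fun ω => ?_)
  rw [Real.norm_eq_abs, Real.norm_of_nonneg (Real.sqrt_nonneg _)]
  exact Real.abs_le_sqrt (single_le_sum (f := fun i => Z ω i ^ 2) (fun i _ => sq_nonneg _)
    (mem_univ i))

variable [IsProbabilityMeasure P]

lemma exists_measure_le_ofReal_mul_rpow_of_isBigO {s : ℕ → Set Ω}
    {lam : ℝ} (hlam : 0 ≤ lam) (h : (fun n => P.real (s n)) =O[atTop] fun n => (n : ℝ) ^ (-lam)) :
    ∃ D : ℝ, ∀ n : ℕ, 1 ≤ n → P (s n) ≤ ENNReal.ofReal (D * (n : ℝ) ^ (-lam)) := by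
  obtain ⟨C, hC⟩ := h.bound
  obtain ⟨N, hN⟩ := eventually_atTop.1 hC
  refine ⟨max C 0 + (N : ℝ) ^ lam, fun n hn => ?_⟩
  have hn0 : (0 : ℝ) < n := by exact_mod_cast hn
  have hpow : 0 < (n : ℝ) ^ (-lam) := Real.rpow_pos_of_pos hn0 _
  rw [← ofReal_measureReal]
  refine ENNReal.ofReal_le_ofReal ?_
  rcases le_or_gt N n with hNn | hnN
  · have := hN n hNn
    rw [Real.norm_of_nonneg measureReal_nonneg, Real.norm_of_nonneg hpow.le] at this
    nlinarith [le_max_left C 0, Real.rpow_nonneg (Nat.cast_nonneg N) lam]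
  · have hNpow : (n : ℝ) ^ lam ≤ (N : ℝ) ^ lam :=
      Real.rpow_le_rpow hn0.le (by exact_mod_cast hnN.le) hlam
    have hone : (n : ℝ) ^ lam * (n : ℝ) ^ (-lam) = 1 := by
      rw [← Real.rpow_add hn0, add_neg_cancel, Real.rpow_zero]
    nlinarith [le_max_right C 0, measureReal_le_one (μ := P) (s := s n)]

lemma mgf_min_le {Y : Ω → ℝ} (hY : MemLp Y 2 P) {a t : ℝ} (ha : 0 ≤ a) (ht : 0 ≤ t) :
    mgf (fun ω => min (Y ω) a) P t
      ≤ Real.exp (t * P[Y] + t ^ 2 * Real.exp (t * a) * ∫ ω, Y ω ^ 2 ∂P) := by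
  set c := t ^ 2 * Real.exp (t * a)
  have hint : Integrable Y P := hY.integrable one_le_two
  have hint1 : Integrable (fun ω => 1 + t * Y ω) P := (integrable_const 1).add (hint.const_mul t)
  have hint2 : Integrable (fun ω => c * Y ω ^ 2) P := hY.integrable_sq.const_mul c
  have hpointwise : ∀ ω, Real.exp (t * min (Y ω) a) ≤ 1 + t * Y ω + c * Y ω ^ 2 := by
    intro ω
    have hmin_sq : min (Y ω) a ^ 2 ≤ Y ω ^ 2 := by
      rcases le_total (Y ω) a with h | h
      · rw [min_eq_left h]
      · rw [min_eq_right h]; nlinarith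
    calc Real.exp (t * min (Y ω) a)
        ≤ 1 + t * min (Y ω) a + (t * min (Y ω) a) ^ 2 * Real.exp (t * a) :=
          exp_le_one_add_add_sq_mul_exp (by gcongr; exact min_le_right _ _) (by positivity)
      _ ≤ 1 + t * Y ω + c * Y ω ^ 2 := by
          have := mul_le_mul_of_nonneg_left (min_le_left (Y ω) a) ht
          have := mul_le_mul_of_nonneg_left hmin_sq (show 0 ≤ c by positivity)
          nlinarith
  have hexp_int : Integrable (fun ω => Real.exp (t * min (Y ω) a)) P := by
    refine (integrable_const (Real.exp (t * a))).mono'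
      ((hY.aemeasurable.min aemeasurable_const).const_mul t).exp.aestronglyMeasurable
      (ae_of_all _ fun ω => ?_)
    rw [Real.norm_of_nonneg (Real.exp_pos _).le]
    exact Real.exp_le_exp.2 (mul_le_mul_of_nonneg_left (min_le_right _ _) ht)
  calc mgf (fun ω => min (Y ω) a) P t
      ≤ ∫ ω, (1 + t * Y ω + c * Y ω ^ 2) ∂P :=
        integral_mono hexp_int (hint1.add hint2) hpointwise
    _ = 1 + (t * P[Y] + c * ∫ ω, Y ω ^ 2 ∂P) := by
        rw [integral_add hint1 hint2, integral_add (integrable_const 1) (hint.const_mul t),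
          integral_const_mul, integral_const_mul]
        simp [add_assoc]
    _ ≤ _ := by rw [add_comm]; exact Real.add_one_le_exp _

lemma measureReal_le_sum_min_le_exp {Y : ℕ → Ω → ℝ} (hY : ∀ k, Measurable (Y k))
    (hind : iIndepFun Y P) (hid : ∀ k, IdentDistrib (Y k) (Y 0) P P) (h2 : MemLp (Y 0) 2 P)
    {a t : ℝ} (ha : 0 ≤ a) (ht : 0 ≤ t) (n : ℕ) (x : ℝ) :
    P.real {ω | x ≤ ∑ k ∈ range n, min (Y k ω) a}
      ≤ Real.exp (-t * x + n * (t * P[Y 0] + t ^ 2 * Real.exp (t * a) * ∫ ω, Y 0 ω ^ 2 ∂P)) := by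
  set T : ℕ → Ω → ℝ := fun k ω => min (Y k ω) a
  have hT : ∀ k, Measurable (T k) := fun k => (hY k).min measurable_const
  have hsum : ∀ ω, ∑ k ∈ range n, min (Y k ω) a = (∑ k ∈ range n, T k) ω := fun ω =>
    (Finset.sum_apply ω (range n) T).symm
  have hS : Measurable (∑ k ∈ range n, T k) := by
    rw [Finset.sum_fn]; exact Finset.measurable_sum _ fun k _ => hT k
  have hint : Integrable (fun ω => Real.exp (t * (∑ k ∈ range n, T k) ω)) P := by
    refine (integrable_const (Real.exp (t * (n * a)))).mono'
      ((hS.const_mul t).exp.aestronglyMeasurable)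
      (ae_of_all _ fun ω => ?_)
    rw [Real.norm_of_nonneg (Real.exp_pos _).le, ← hsum]
    refine Real.exp_le_exp.2 (mul_le_mul_of_nonneg_left ?_ ht)
    simpa using sum_le_sum fun k (_ : k ∈ range n) => min_le_right (Y k ω) a
  have hTind : iIndepFun T P := hind.comp _ fun _ => measurable_id.min measurable_const
  have hmgf : ∀ k, mgf (T k) P t = mgf (T 0) P t := fun k =>
    (((hid k).comp (measurable_id.min measurable_const)).comp
      (measurable_const_mul t).exp).integral_eq
  calc P.real {ω | x ≤ ∑ k ∈ range n, min (Y k ω) a}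
      = P.real {ω | x ≤ (∑ k ∈ range n, T k) ω} := by simp only [hsum]
    _ ≤ Real.exp (-t * x) * mgf (∑ k ∈ range n, T k) P t := measure_ge_le_exp_mul_mgf x ht hint
    _ = Real.exp (-t * x) * mgf (T 0) P t ^ n := by
        rw [hTind.mgf_sum hT, prod_congr rfl fun k _ => hmgf k, prod_const, card_range]
    _ ≤ Real.exp (-t * x)
          * Real.exp (t * P[Y 0] + t ^ 2 * Real.exp (t * a) * ∫ ω, Y 0 ω ^ 2 ∂P) ^ n := by
        gcongr
        · exact mgf_nonneg
        · exact mgf_min_le h2 ha ht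
    _ = _ := by rw [← Real.exp_nat_mul, ← Real.exp_add]

lemma isBigO_measureReal_biUnion_mul_lt {Y : ℕ → Ω → ℝ}
    (hid : ∀ k, IdentDistrib (Y k) (Y 0) P P) {lam : ℝ} (hlam : 1 ≤ lam)
    (hmom : MemLp (Y 0) (ENNReal.ofReal (2 * lam)) P) {c : ℝ} (hc : 0 < c) :
    (fun n : ℕ => P.real (⋃ k ∈ range n, {ω | c * n < Y k ω}))
      =O[atTop] fun n => (n : ℝ) ^ (-lam) := by
  set K := ∫ ω, |Y 0 ω| ^ (2 * lam) ∂P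
  have hK : Integrable (fun ω => |Y 0 ω| ^ (2 * lam)) P := by
    simpa only [Real.norm_eq_abs, ENNReal.toReal_ofReal (by positivity : 0 ≤ 2 * lam)] using
      hmom.integrable_norm_rpow (ENNReal.ofReal_pos.2 (by linarith)).ne' ENNReal.ofReal_ne_top
  have hK0 : 0 ≤ K := integral_nonneg fun ω => by positivity
  refine IsBigO.of_bound (K / c ^ (2 * lam)) ?_
  filter_upwards [eventually_ge_atTop 1] with n hn
  have hn0 : (0 : ℝ) < n := by exact_mod_cast hn
  have hsame : ∀ k, P.real {ω | c * n < Y k ω} = P.real {ω | c * n < Y 0 ω} := fun k =>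
    congrArg ENNReal.toReal ((hid k).measure_mem_eq measurableSet_Ioi)
  rw [Real.norm_of_nonneg measureReal_nonneg, Real.norm_of_nonneg (by positivity)]
  calc P.real (⋃ k ∈ range n, {ω | c * n < Y k ω})
      ≤ ∑ k ∈ range n, P.real {ω | c * n < Y k ω} := measureReal_biUnion_finset_le _ _
    _ = n * P.real {ω | c * n < Y 0 ω} := by
        rw [sum_congr rfl fun k _ => hsame k, sum_const, card_range, nsmul_eq_mul]
    _ ≤ n * (K / (c * n) ^ (2 * lam)) := by
        gcongr
        exact measureReal_lt_le_integral_rpow_div (by positivity) hK (by positivity)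
    _ = K / c ^ (2 * lam) * (n : ℝ) ^ (1 - 2 * lam) := by
        rw [Real.mul_rpow hc.le hn0.le, Real.rpow_sub hn0, Real.rpow_one]
        field_simp
    _ ≤ K / c ^ (2 * lam) * (n : ℝ) ^ (-lam) := by
        gcongr
        · exact_mod_cast hn
        · linarith

lemma eventually_measureReal_le_sum_min_le_rpow {Y : ℕ → Ω → ℝ} (hY : ∀ k, Measurable (Y k))
    (hind : iIndepFun Y P) (hid : ∀ k, IdentDistrib (Y k) (Y 0) P P) (h2 : MemLp (Y 0) 2 P)
    {lam ε : ℝ} (hlam : 0 < lam) (hε : 0 < ε) :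
    ∀ᶠ n : ℕ in atTop, P.real {ω | n * (P[Y 0] + ε)
        ≤ ∑ k ∈ range n, min (Y k ω) (ε / (4 * lam) * n)} ≤ (n : ℝ) ^ (-lam) := by
  set K := ∫ ω, Y 0 ω ^ 2 ∂P
  set β := 2 * lam / ε
  have hβ : 0 < β := by positivity
  have hsmall : ∀ᶠ n : ℕ in atTop, β * K * (Real.log n / (n : ℝ) ^ (2⁻¹ : ℝ)) < ε / 2 := by
    have := (((isLittleO_log_rpow_atTop (by norm_num : (0 : ℝ) < 2⁻¹)).tendsto_div_nhds_zero
      ).comp tendsto_natCast_atTop_atTop).const_mul (β * K)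
    rw [mul_zero] at this
    exact this.eventually (gt_mem_nhds (half_pos hε))
  filter_upwards [hsmall, eventually_ge_atTop 1] with n hsmall hn
  have hn0 : (0 : ℝ) < n := by exact_mod_cast hn
  set L := Real.log n
  have hL : 0 ≤ L := Real.log_nonneg (by exact_mod_cast hn)
  set t := β * L / n
  have hexp : Real.exp (t * (ε / (4 * lam) * n)) = (n : ℝ) ^ (2⁻¹ : ℝ) := by
    rw [Real.rpow_def_of_pos hn0]
    congr 1
    simp only [t, L, β]
    field_simp
    ring
  refine (measureReal_le_sum_min_le_exp hY hind hid h2 (t := t) (by positivity) (by positivity) n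
    _).trans ?_
  rw [hexp, Real.rpow_def_of_pos hn0 (-lam), Real.exp_le_exp]
  set s := (n : ℝ) ^ (2⁻¹ : ℝ)
  have hs : s * s = n := by rw [← Real.rpow_add hn0]; norm_num
  have hs0 : 0 < s := by positivity
  have key : -t * (n * (P[Y 0] + ε)) + n * (t * P[Y 0] + t ^ 2 * s * K)
      = β * L * (β * K * (L / s) - ε) := by
    simp only [t]
    rw [← hs]
    field_simp
    ring
  have : β * ε = 2 * lam := div_mul_cancel₀ _ hε.ne'
  rw [key]
  nlinarith [mul_le_mul_of_nonneg_left hsmall.le (by positivity : 0 ≤ β * L)]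

theorem isBigO_measureReal_le_average_sub {Y : ℕ → Ω → ℝ} (hY : ∀ k, Measurable (Y k))
    (hind : iIndepFun Y P) (hid : ∀ k, IdentDistrib (Y k) (Y 0) P P) {lam : ℝ} (hlam : 1 ≤ lam)
    (hmom : MemLp (Y 0) (ENNReal.ofReal (2 * lam)) P) {ε : ℝ} (hε : 0 < ε) :
    (fun n : ℕ => P.real {ω | ε ≤ (n : ℝ)⁻¹ * ∑ k ∈ range n, Y k ω - P[Y 0]})
      =O[atTop] fun n => (n : ℝ) ^ (-lam) := by
  set a : ℕ → ℝ := fun n => ε / (4 * lam) * n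
  have hincl : ∀ n : ℕ, {ω | ε ≤ (n : ℝ)⁻¹ * ∑ k ∈ range n, Y k ω - P[Y 0]} ⊆
      (⋃ k ∈ range n, {ω | a n < Y k ω}) ∪
        {ω | n * (P[Y 0] + ε) ≤ ∑ k ∈ range n, min (Y k ω) (a n)} := by
    intro n ω hω
    by_cases hbig : ∃ k ∈ range n, a n < Y k ω
    · obtain ⟨k, hk, h⟩ := hbig
      exact Or.inl (Set.mem_biUnion hk h)
    push Not at hbig
    right
    simp only [Set.mem_ofPred_eq] at hω ⊢
    rw [sum_congr rfl fun k hk => min_eq_left (hbig k hk)]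
    rcases Nat.eq_zero_or_pos n with rfl | hn
    · simp
    have hn : (n : ℝ) ≠ 0 := by positivity
    nlinarith [mul_inv_cancel_left₀ hn (∑ k ∈ range n, Y k ω)]
  have h2 : MemLp (Y 0) 2 P :=
    hmom.mono_exponent (by rw [← ENNReal.ofReal_ofNat 2]; gcongr; linarith)
  exact isBigO_measureReal_of_subset_union hincl
    (isBigO_measureReal_biUnion_mul_lt hid hlam hmom (by positivity))
    (IsBigO.of_bound 1 <| (eventually_measureReal_le_sum_min_le_rpow hY hind hid h2
      (lam := lam) (by linarith) hε).mono fun n hn => by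
        rwa [Real.norm_of_nonneg measureReal_nonneg, one_mul,
          Real.norm_of_nonneg (Real.rpow_nonneg n.cast_nonneg _)])

theorem isBigO_measureReal_le_abs_average_sub {Y : ℕ → Ω → ℝ} (hY : ∀ k, Measurable (Y k))
    (hind : iIndepFun Y P) (hid : ∀ k, IdentDistrib (Y k) (Y 0) P P) {lam : ℝ} (hlam : 1 ≤ lam)
    (hmom : MemLp (Y 0) (ENNReal.ofReal (2 * lam)) P) {ε : ℝ} (hε : 0 < ε) :
    (fun n : ℕ => P.real {ω | ε ≤ |(n : ℝ)⁻¹ * ∑ k ∈ range n, Y k ω - P[Y 0]|})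
      =O[atTop] fun n => (n : ℝ) ^ (-lam) := by
  have hneg := isBigO_measureReal_le_average_sub (Y := fun k ω => -Y k ω)
    (fun k => (hY k).neg) (hind.comp _ fun _ => measurable_neg)
    (fun k => (hid k).comp measurable_neg) hlam hmom.neg hε
  refine isBigO_measureReal_of_subset_union (fun n ω hω => ?_)
    (isBigO_measureReal_le_average_sub hY hind hid hlam hmom hε) hneg
  simp only [Set.mem_ofPred_eq, Set.mem_union, sum_neg_distrib, integral_neg] at hω ⊢
  rcases le_abs.1 hω with h | h
  · exact Or.inl h
  · right; linarith

theorem isBigO_measureReal_lt_abs_sampleCov_sub_covariance {d : ℕ} {X : ℕ → Ω → (Fin d → ℝ)}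
    (hX : ∀ k, Measurable (X k)) (hind : iIndepFun X P)
    (hid : ∀ k, IdentDistrib (X k) (X 0) P P) {lam : ℝ} (hlam : 1 ≤ lam)
    (hmom : ∀ i, MemLp (fun ω => X 0 ω i) (ENNReal.ofReal (4 * lam)) P) (i j : Fin d) {δ : ℝ}
    (hδ : 0 < δ) :
    (fun n : ℕ => P.real
        {ω | δ < |sampleCov X n ω i j - cov[fun ω => X 0 ω i, fun ω => X 0 ω j; P]|})
      =O[atTop] fun n => (n : ℝ) ^ (-lam) := by
  have tail : ∀ g : (Fin d → ℝ) → ℝ, Measurable g →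
      MemLp (fun ω => g (X 0 ω)) (ENNReal.ofReal (2 * lam)) P → ∀ η > 0,
      (fun n : ℕ => P.real
          {ω | η ≤ |(n : ℝ)⁻¹ * ∑ k ∈ range n, g (X k ω) - ∫ ω, g (X 0 ω) ∂P|})
        =O[atTop] fun n => (n : ℝ) ^ (-lam) := fun g hg hgX η hη =>
    isBigO_measureReal_le_abs_average_sub (Y := fun k ω => g (X k ω)) (fun k => hg.comp (hX k))
      (hind.comp _ fun _ => hg) (fun k => (hid k).comp hg) hlam hgX hη
  have hcoord : ∀ l, MemLp (fun ω => X 0 ω l) (ENNReal.ofReal (2 * lam)) P := fun l =>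
    (hmom l).mono_exponent (by gcongr; linarith)
  have hL2 : ∀ l, MemLp (fun ω => X 0 ω l) 2 P := fun l =>
    (hmom l).mono_exponent (by rw [← ENNReal.ofReal_ofNat 2]; gcongr; linarith)
  have hprod : MemLp (fun ω => X 0 ω i * X 0 ω j) (ENNReal.ofReal (2 * lam)) P := by
    have : ENNReal.HolderTriple (ENNReal.ofReal (4 * lam)) (ENNReal.ofReal (4 * lam))
        (ENNReal.ofReal (2 * lam)) := ⟨by
      rw [← ENNReal.ofReal_inv_of_pos (by linarith), ← ENNReal.ofReal_add (by positivity)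
        (by positivity), ← ENNReal.ofReal_inv_of_pos (by linarith)]
      congr 1
      field_simp
      norm_num⟩
    exact (hmom j).mul (hmom i)
  obtain ⟨η, hη, hclose⟩ := exists_pos_abs_sub_mul_sub_lt
    (∫ ω, X 0 ω i * X 0 ω j ∂P) (∫ ω, X 0 ω i ∂P) (∫ ω, X 0 ω j ∂P) hδ
  refine isBigO_measureReal_of_subset_union (fun n ω hω => ?_)
    (tail (fun v => v i * v j) (by fun_prop) hprod η hη)
    (isBigO_measureReal_of_subset_union (fun n => subset_rfl)
      (tail (fun v => v i) (by fun_prop) (hcoord i) η hη)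
      (tail (fun v => v j) (by fun_prop) (hcoord j) η hη))
  simp only [Set.mem_union, Set.mem_ofPred_eq] at hω ⊢
  by_contra! hfar
  rw [sampleCov_apply, covariance_eq_sub (hL2 i) (hL2 j)] at hω
  exact (hclose _ _ _ hfar.1 hfar.2.1 hfar.2.2).not_gt hω

end Tail

/-- Let `X, X₁, X₂, …` be i.i.d. random vectors in `ℝ^d` with `E[‖X‖^{4λ}] < ∞`
(`λ > 1`), population covariance `V₀` and sample covariance `V̂ₙ`.  If
`C₃ > 1` satisfies `λ_max(V₀) ≤ C₃/2` and `λ_min(V₀) ≥ 2/C₃`, then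
`P( λ_max(V̂ₙ) > C₃ or λ_min(V̂ₙ) < C₃⁻¹ ) = O(n^{-λ})` as `n → ∞`. -/
theorem stmt_6 {Ω : Type*} [MeasurableSpace Ω] (P : Measure Ω) [IsProbabilityMeasure P]
    (d : ℕ) (X : ℕ → Ω → (Fin d → ℝ))
    (hmeas : ∀ i, Measurable (X i))
    (hindep : iIndepFun X P)
    (hident : ∀ i, IdentDistrib (X i) (X 0) P P)
    (lam : ℝ) (hlam : 1 < lam)
    (hmom : Integrable (fun ω => Real.sqrt (∑ i, X 0 ω i ^ 2) ^ (4 * lam)) P)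
    (μ : Fin d → ℝ) (hμ : ∀ i, μ i = ∫ ω, X 0 ω i ∂P)
    (V0 : Matrix (Fin d) (Fin d) ℝ)
    (hV0 : ∀ i j, V0 i j = ∫ ω, (X 0 ω i - μ i) * (X 0 ω j - μ j) ∂P)
    (C3 : ℝ) (hC3 : 1 < C3)
    (hmax : lambdaMax V0 ≤ C3 / 2) (hmin : 2 / C3 ≤ lambdaMin V0) :
    ∃ D : ℝ, ∀ n : ℕ, 1 ≤ n →
      P {ω | C3 < lambdaMax (sampleCov X n ω) ∨ lambdaMin (sampleCov X n ω) < C3⁻¹}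
        ≤ ENNReal.ofReal (D * (n : ℝ) ^ (-lam)) := by
  have hC3 : 0 < C3 := by linarith
  have hd : 0 < d := by
    rcases Nat.eq_zero_or_pos d with rfl | hd
    · rw [lambdaMin_of_fin_zero] at hmin
      exact absurd hmin (not_le.2 (by positivity))
    · exact hd
  have hcov : ∀ i j, V0 i j = cov[fun ω => X 0 ω i, fun ω => X 0 ω j; P] := fun i j => by
    simp only [hV0 i j, covariance, ← hμ]
  set δ := min (C3 / 2) C3⁻¹ / d
  have hδ : 0 < δ := by positivity
  have hdδ : d * δ = min (C3 / 2) C3⁻¹ := mul_div_cancel₀ _ (by positivity)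
  refine exists_measure_le_ofReal_mul_rpow_of_isBigO (by linarith)
    (isBigO_measureReal_of_subset_iUnion
      (t := fun (p : Fin d × Fin d) n => {ω | δ < |sampleCov X n ω p.1 p.2 - V0 p.1 p.2|})
      (fun n ω hω => ?_) fun p => ?_)
  · by_contra hfar
    simp only [Set.mem_iUnion, Set.mem_ofPred_eq, not_exists, not_lt] at hfar
    have hmax' := lambdaMax_le_lambdaMax_add hd fun i j => hfar (i, j)
    have hmin' := lambdaMin_sub_le_lambdaMin hd fun i j => hfar (i, j)
    have : 2 / C3 - C3⁻¹ = C3⁻¹ := by ring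
    rcases hω with h | h <;> linarith [min_le_left (C3 / 2) C3⁻¹, min_le_right (C3 / 2) C3⁻¹]
  · simp only [hcov]
    exact isBigO_measureReal_lt_abs_sampleCov_sub_covariance hmeas hindep hident hlam.le
      (memLp_apply_of_integrable_sqrt_sum_sq_rpow (hmeas 0) (by linarith) hmom) p.1 p.2 hδ
end

section
/- Let X, X_1, X_2, … be i.i.d. random vectors in ℝ^d with characteristic function χ(t) = E[exp(i tᵀX)] satisfying Cramér's condition, and let χ*_n(t) = n^{-1} Σ_{j=1}^n exp(i tᵀX_j) denote the empirical characteristic function. Fix constants u > 0, ν > 0, C > 0, and an integer m ≥ 2. Then P( ∫_{ℝ^d} |χ*_n(n^{-1/2+u} t) − χ(n^{-1/2+u} t)|^m exp(−C ‖t‖^{1/2}) dt > n^{-d(u+1) − (ν+3)/2} ) = O( n^{-(m/2 − d(u+1) − (ν+3)/2)} ) as n → ∞. In particular, for any λ > 0, if m is chosen large enough that m/2 − d(u+1) − (ν+3)/2 ≥ λ, then this probability is O(n^{-λ}). -/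
open MeasureTheory ProbabilityTheory BigOperators Finset Filter

/-- The characteristic function `χ(t) = E[exp(i tᵀX)]` of a random vector. -/
noncomputable def charFun {Ω : Type*} [MeasurableSpace Ω] (P : Measure Ω)
    {d : ℕ} (X : Ω → (Fin d → ℝ)) (t : Fin d → ℝ) : ℂ :=
  ∫ ω, Complex.exp (Complex.I * ((∑ k, t k * X ω k : ℝ) : ℂ)) ∂P

/-- The empirical characteristic function
`χ*ₙ(t) = n⁻¹ ∑_{j=1}^n exp(i tᵀXⱼ)` of the sample `X₁(ω), …, Xₙ(ω)`. -/
noncomputable def empCharFun {Ω : Type*} {d : ℕ} (X : ℕ → Ω → (Fin d → ℝ))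
    (n : ℕ) (ω : Ω) (t : Fin d → ℝ) : ℂ :=
  (n : ℂ)⁻¹ * ∑ j ∈ Finset.range n,
    Complex.exp (Complex.I * ((∑ k, t k * X j ω k : ℝ) : ℂ))

/-!
Markov's inequality and Tonelli's theorem bound the probability that the weighted integral exceeds
`a` by `a⁻¹ · sup_s E|χ*ₙ(s) − χ(s)|^m · ∫ exp(−C‖t‖^{1/2}) dt`; the weight is integrable because
it decays faster than any power of `‖t‖`. For each `s`, the real and imaginary parts of
`n (χ*ₙ(s) − χ(s))` are sums of `n` independent centred variables with values in `[-1, 1]`, hence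
sub-Gaussian with variance proxy `n` by Hoeffding's lemma. A sub-Gaussian `Y` with proxy `c` has
`E|Y|^m ≤ 2 m! e^{1/2} c^{m/2}`, from `|y|^m ≤ m! s^{-m} (e^{sy} + e^{-sy})` with `s = c^{-1/2}`.
Hence `E|χ*ₙ(s) − χ(s)|^m = O(n^{-m/2})` uniformly in `s`, and dividing by the threshold
`a = n^{-d(u+1)-(ν+3)/2}` gives the stated rate.
-/

open scoped Nat NNReal ENNReal

namespace ProbabilityTheory.HasSubgaussianMGF

variable {Ω : Type*} [MeasurableSpace Ω] {μ : Measure Ω} {Y : Ω → ℝ} {c : ℝ≥0}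

theorem integral_abs_pow_le (h : HasSubgaussianMGF Y c μ) (m : ℕ) {s : ℝ} (hs : 0 < s) :
    ∫ ω, |Y ω| ^ m ∂μ ≤ 2 * m ! * Real.exp (c * s ^ 2 / 2) / s ^ m := by
  have hexp : ∀ x : ℝ, |x| ^ m ≤ m ! / s ^ m * (Real.exp (s * x) + Real.exp (-s * x)) := by
    intro x
    have h1 := Real.pow_div_factorial_le_exp _ (mul_nonneg hs.le (abs_nonneg x)) m
    have h2 : Real.exp (s * |x|) ≤ Real.exp (s * x) + Real.exp (-s * x) := by
      rcases abs_choice x with hx | hx <;> rw [hx]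
      · linarith [Real.exp_pos (-s * x)]
      · rw [mul_neg, ← neg_mul]; linarith [Real.exp_pos (s * x)]
    rw [mul_pow, div_le_iff₀ (by positivity)] at h1
    rw [div_mul_eq_mul_div, le_div_iff₀ (by positivity)]
    nlinarith [Real.exp_pos (s * x), Real.exp_pos (-s * x)]
  calc ∫ ω, |Y ω| ^ m ∂μ
      ≤ ∫ ω, m ! / s ^ m * (Real.exp (s * Y ω) + Real.exp (-s * Y ω)) ∂μ :=
        integral_mono_of_nonneg (ae_of_all _ fun ω => by positivity)
          (((h.integrable_exp_mul s).add (h.integrable_exp_mul (-s))).const_mul _)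
          (ae_of_all _ fun ω => hexp (Y ω))
    _ = m ! / s ^ m * (mgf Y μ s + mgf Y μ (-s)) := by
        rw [integral_const_mul, integral_add (h.integrable_exp_mul s) (h.integrable_exp_mul (-s))]
        rfl
    _ ≤ m ! / s ^ m * (Real.exp (c * s ^ 2 / 2) + Real.exp (c * (-s) ^ 2 / 2)) := by
        gcongr
        exacts [h.mgf_le s, h.mgf_le (-s)]
    _ = 2 * m ! * Real.exp (c * s ^ 2 / 2) / s ^ m := by
        rw [neg_sq]; ring

end ProbabilityTheory.HasSubgaussianMGF

theorem norm_inv_mul_sum_sub_pow_le (z : ℕ → ℂ) (c : ℂ) {n : ℕ} (hn : 0 < n) (m : ℕ) :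
    ‖(n : ℂ)⁻¹ * ∑ j ∈ range n, z j - c‖ ^ m
      ≤ 2 ^ m / n ^ m * (|∑ j ∈ range n, ((z j).re - c.re)| ^ m
        + |∑ j ∈ range n, ((z j).im - c.im)| ^ m) := by
  set a := |∑ j ∈ range n, ((z j).re - c.re)|
  set b := |∑ j ∈ range n, ((z j).im - c.im)|
  have hsplit : (n : ℂ)⁻¹ * ∑ j ∈ range n, z j - c = (n : ℂ)⁻¹ * ∑ j ∈ range n, (z j - c) := by
    rw [sum_sub_distrib, sum_const, card_range, nsmul_eq_mul, mul_sub,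
      inv_mul_cancel_left₀ (Nat.cast_ne_zero.mpr hn.ne')]
  have hnorm : ‖(n : ℂ)⁻¹ * ∑ j ∈ range n, z j - c‖ ≤ (a + b) / n := by
    rw [hsplit, norm_mul, norm_inv, Complex.norm_natCast, inv_mul_eq_div]
    gcongr
    refine (Complex.norm_le_abs_re_add_abs_im _).trans_eq ?_
    simp only [a, b, Complex.re_sum, Complex.im_sum, Complex.sub_re, Complex.sub_im]
  calc _ ≤ ((a + b) / n) ^ m := by gcongr
    _ ≤ 2 ^ (m - 1) * (a ^ m + b ^ m) / n ^ m := by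
        rw [div_pow]; gcongr; exact add_pow_le (abs_nonneg _) (abs_nonneg _) m
    _ ≤ 2 ^ m / n ^ m * (a ^ m + b ^ m) := by
        rw [div_mul_eq_mul_div]; gcongr <;> norm_num

section IIDSums

variable {Ω E : Type*} [MeasurableSpace Ω] [MeasurableSpace E] {P : Measure Ω}
  [IsProbabilityMeasure P] {X : ℕ → Ω → E}

theorem hasSubgaussianMGF_sum_range_sub_integral (hmeas : ∀ i, Measurable (X i))
    (hindep : iIndepFun X P) (hident : ∀ i, IdentDistrib (X i) (X 0) P P) {f : E → ℝ}
    (hf : Measurable f) (hf1 : ∀ x, |f x| ≤ 1) (n : ℕ) :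
    HasSubgaussianMGF (fun ω => ∑ j ∈ range n, (f (X j ω) - ∫ ω', f (X 0 ω') ∂P)) n P := by
  have hmean : ∀ j, ∫ ω, f (X j ω) ∂P = ∫ ω, f (X 0 ω) ∂P :=
    fun j => ((hident j).comp hf).integral_eq
  have hsub : ∀ j, HasSubgaussianMGF (fun ω => f (X j ω) - ∫ ω', f (X 0 ω') ∂P) 1 P := by
    intro j
    have h := hasSubgaussianMGF_of_mem_Icc (μ := P) (X := fun ω => f (X j ω)) (a := -1) (b := 1)
      (hf.comp (hmeas j)).aemeasurable (ae_of_all _ fun ω => abs_le.mp (hf1 (X j ω)))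
    rw [hmean j] at h
    convert h
    norm_num
  have hind : iIndepFun (fun j ω => f (X j ω) - ∫ ω', f (X 0 ω') ∂P) P :=
    hindep.comp (fun _ x => f x - ∫ ω', f (X 0 ω') ∂P) fun _ => hf.sub_const _
  simpa using HasSubgaussianMGF.sum_of_iIndepFun hind (s := range n) fun j _ => hsub j

theorem integral_abs_sum_range_sub_integral_pow_le (hmeas : ∀ i, Measurable (X i))
    (hindep : iIndepFun X P) (hident : ∀ i, IdentDistrib (X i) (X 0) P P) {f : E → ℝ}
    (hf : Measurable f) (hf1 : ∀ x, |f x| ≤ 1) {n : ℕ} (hn : 0 < n) (m : ℕ) :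
    ∫ ω, |∑ j ∈ range n, (f (X j ω) - ∫ ω', f (X 0 ω') ∂P)| ^ m ∂P
      ≤ 2 * m ! * Real.exp (1 / 2) * √n ^ m := by
  have hsqrt : 0 < √(n : ℝ) := Real.sqrt_pos.mpr (Nat.cast_pos.mpr hn)
  have hsub := hasSubgaussianMGF_sum_range_sub_integral hmeas hindep hident hf hf1 n
  convert hsub.integral_abs_pow_le m (inv_pos.mpr hsqrt) using 1
  rw [inv_pow, inv_pow, div_inv_eq_mul, Real.sq_sqrt (Nat.cast_nonneg n), NNReal.coe_natCast,
    mul_inv_cancel₀ (Nat.cast_pos.mpr hn).ne']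

theorem integral_norm_mean_sub_integral_pow_le (hmeas : ∀ i, Measurable (X i))
    (hindep : iIndepFun X P) (hident : ∀ i, IdentDistrib (X i) (X 0) P P) {h : E → ℂ}
    (hh : Measurable h) (hh1 : ∀ x, ‖h x‖ ≤ 1) {n : ℕ} (hn : 0 < n) (m : ℕ) :
    ∫ ω, ‖(n : ℂ)⁻¹ * ∑ j ∈ range n, h (X j ω) - ∫ ω', h (X 0 ω') ∂P‖ ^ m ∂P
      ≤ 2 ^ (m + 2) * m ! * Real.exp (1 / 2) / √n ^ m := by
  set A : Ω → ℝ := fun ω => ∑ j ∈ range n, ((h (X j ω)).re - ∫ ω', (h (X 0 ω')).re ∂P)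
  set B : Ω → ℝ := fun ω => ∑ j ∈ range n, ((h (X j ω)).im - ∫ ω', (h (X 0 ω')).im ∂P)
  have hint : Integrable (fun ω => h (X 0 ω)) P :=
    Integrable.of_bound (hh.comp (hmeas 0)).aestronglyMeasurable 1 (ae_of_all _ fun ω => hh1 _)
  have hc_re : (∫ ω, h (X 0 ω) ∂P).re = ∫ ω, (h (X 0 ω)).re ∂P := (integral_re hint).symm
  have hc_im : (∫ ω, h (X 0 ω) ∂P).im = ∫ ω, (h (X 0 ω)).im ∂P := (integral_im hint).symm
  have hpow : ∀ ω, ‖(n : ℂ)⁻¹ * ∑ j ∈ range n, h (X j ω) - ∫ ω', h (X 0 ω') ∂P‖ ^ m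
      ≤ 2 ^ m / n ^ m * (|A ω| ^ m + |B ω| ^ m) := fun ω => by
    simpa only [hc_re, hc_im] using
      norm_inv_mul_sum_sub_pow_le (fun j => h (X j ω)) (∫ ω', h (X 0 ω') ∂P) hn m
  have hre_meas : Measurable fun x => (h x).re := Complex.measurable_re.comp hh
  have him_meas : Measurable fun x => (h x).im := Complex.measurable_im.comp hh
  have hre1 : ∀ x, |(h x).re| ≤ 1 := fun x => (Complex.abs_re_le_norm _).trans (hh1 x)
  have him1 : ∀ x, |(h x).im| ≤ 1 := fun x => (Complex.abs_im_le_norm _).trans (hh1 x)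
  have hAm : Integrable (fun ω => |A ω| ^ m) P := by
    simpa only [Real.norm_eq_abs] using ((hasSubgaussianMGF_sum_range_sub_integral hmeas hindep
      hident hre_meas hre1 n).memLp m).integrable_norm_pow'
  have hBm : Integrable (fun ω => |B ω| ^ m) P := by
    simpa only [Real.norm_eq_abs] using ((hasSubgaussianMGF_sum_range_sub_integral hmeas hindep
      hident him_meas him1 n).memLp m).integrable_norm_pow'
  have hA : ∫ ω, |A ω| ^ m ∂P ≤ 2 * m ! * Real.exp (1 / 2) * √n ^ m :=
    integral_abs_sum_range_sub_integral_pow_le hmeas hindep hident hre_meas hre1 hn m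
  have hB : ∫ ω, |B ω| ^ m ∂P ≤ 2 * m ! * Real.exp (1 / 2) * √n ^ m :=
    integral_abs_sum_range_sub_integral_pow_le hmeas hindep hident him_meas him1 hn m
  have hsqrt : (n : ℝ) ^ m = √n ^ m * √n ^ m := by
    rw [← mul_pow, Real.mul_self_sqrt (Nat.cast_nonneg n)]
  calc _ ≤ ∫ ω, 2 ^ m / n ^ m * (|A ω| ^ m + |B ω| ^ m) ∂P :=
        integral_mono_of_nonneg (ae_of_all _ fun ω => by positivity)
          ((hAm.add hBm).const_mul _) (ae_of_all _ hpow)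
    _ = 2 ^ m / n ^ m * (∫ ω, |A ω| ^ m ∂P + ∫ ω, |B ω| ^ m ∂P) := by
        rw [integral_const_mul, integral_add hAm hBm]
    _ ≤ 2 ^ m / n ^ m * (2 * (2 * m ! * Real.exp (1 / 2) * √n ^ m)) := by
        gcongr; linarith
    _ = 2 ^ (m + 2) * m ! * Real.exp (1 / 2) / √n ^ m := by
        have : 0 < √(n : ℝ) := Real.sqrt_pos.mpr (Nat.cast_pos.mpr hn)
        rw [hsqrt]; field_simp; ring

end IIDSums

theorem measure_lt_integral_mul_le {Ω α : Type*} [MeasurableSpace Ω] [MeasurableSpace α]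
    {P : Measure Ω} [IsFiniteMeasure P] {μ : Measure α} [SFinite μ] {g : Ω → α → ℝ}
    (hg : Measurable (Function.uncurry g)) (hg0 : ∀ ω t, 0 ≤ g ω t) {K : ℝ}
    (hgK : ∀ ω t, g ω t ≤ K) {B : ℝ} (hB : ∀ t, ∫ ω, g ω t ∂P ≤ B) {w : α → ℝ}
    (hwm : Measurable w) (hw : Integrable w μ) (hw0 : ∀ t, 0 ≤ w t) {a : ℝ} (ha : 0 < a) :
    P {ω | a < ∫ t, g ω t * w t ∂μ} ≤ ENNReal.ofReal (B * (∫ t, w t ∂μ) / a) := by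
  set F : Ω → α → ℝ≥0∞ := fun ω t => ENNReal.ofReal (g ω t * w t)
  have hF : Measurable (Function.uncurry F) :=
    ENNReal.measurable_ofReal.comp (hg.mul (hwm.comp measurable_snd))
  have hint : ∀ ω, Integrable (fun t => g ω t * w t) μ := fun ω =>
    (hw.const_mul K).mono' (hg.comp measurable_prodMk_left |>.mul hwm).aestronglyMeasurable
      (ae_of_all _ fun t => by
        rw [Real.norm_eq_abs, abs_of_nonneg (mul_nonneg (hg0 ω t) (hw0 t))]
        exact mul_le_mul_of_nonneg_right (hgK ω t) (hw0 t))
  have hsub : {ω | a < ∫ t, g ω t * w t ∂μ} ⊆ {ω | ENNReal.ofReal a ≤ ∫⁻ t, F ω t ∂μ} := by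
    intro ω hω
    rw [Set.mem_ofPred_eq, ← ofReal_integral_eq_lintegral_ofReal (hint ω)
      (ae_of_all _ fun t => mul_nonneg (hg0 ω t) (hw0 t))]
    exact ENNReal.ofReal_le_ofReal hω.le
  have hmean : ∀ t, ∫⁻ ω, F ω t ∂P ≤ ENNReal.ofReal B * ENNReal.ofReal (w t) := by
    intro t
    have hgt : Integrable (fun ω => g ω t) P :=
      Integrable.of_bound (hg.comp measurable_prodMk_right).aestronglyMeasurable K
        (ae_of_all _ fun ω => by rw [Real.norm_eq_abs, abs_of_nonneg (hg0 ω t)]; exact hgK ω t)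
    calc ∫⁻ ω, F ω t ∂P = (∫⁻ ω, ENNReal.ofReal (g ω t) ∂P) * ENNReal.ofReal (w t) := by
          simp_rw [F, ENNReal.ofReal_mul (hg0 _ t)]
          exact lintegral_mul_const _ (ENNReal.measurable_ofReal.comp
            (hg.comp measurable_prodMk_right))
      _ ≤ ENNReal.ofReal B * ENNReal.ofReal (w t) := by
          rw [← ofReal_integral_eq_lintegral_ofReal hgt (ae_of_all _ fun ω => hg0 ω t)]
          gcongr
          exact hB t
  calc P {ω | a < ∫ t, g ω t * w t ∂μ}
      ≤ P {ω | ENNReal.ofReal a ≤ ∫⁻ t, F ω t ∂μ} := measure_mono hsub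
    _ ≤ (∫⁻ ω, ∫⁻ t, F ω t ∂μ ∂P) / ENNReal.ofReal a :=
        meas_ge_le_lintegral_div hF.lintegral_prod_right'.aemeasurable
          (ENNReal.ofReal_pos.mpr ha).ne' ENNReal.ofReal_ne_top
    _ = (∫⁻ t, ∫⁻ ω, F ω t ∂P ∂μ) / ENNReal.ofReal a := by
        rw [lintegral_lintegral_swap hF.aemeasurable]
    _ ≤ (∫⁻ t, ENNReal.ofReal B * ENNReal.ofReal (w t) ∂μ) / ENNReal.ofReal a := by
        gcongr with t
        exact hmean t
    _ = ENNReal.ofReal (B * (∫ t, w t ∂μ) / a) := by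
        rw [lintegral_const_mul _ hwm.ennreal_ofReal,
          ← ofReal_integral_eq_lintegral_ofReal hw (ae_of_all _ hw0),
          ← ENNReal.ofReal_mul' (integral_nonneg hw0), ENNReal.ofReal_div_of_pos ha]

theorem one_add_sq_pow_mul_exp_neg_le {C w : ℝ} (hC : 0 < C) (hw : 0 ≤ w) (k : ℕ) :
    (1 + w ^ 2) ^ k * Real.exp (-(C * w)) ≤ (2 * k)! * Real.exp C / C ^ (2 * k) := by
  have hfac := Real.pow_div_factorial_le_exp (C * (1 + w)) (by positivity) (2 * k)
  rw [div_le_iff₀ (by positivity), mul_pow, mul_add, mul_one, Real.exp_add] at hfac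
  have hsq : (1 + w ^ 2) ^ k ≤ (1 + w) ^ (2 * k) := by
    rw [pow_mul]; gcongr; nlinarith
  rw [le_div_iff₀ (by positivity), Real.exp_neg]
  calc (1 + w ^ 2) ^ k * (Real.exp (C * w))⁻¹ * C ^ (2 * k)
      = C ^ (2 * k) * (1 + w ^ 2) ^ k * (Real.exp (C * w))⁻¹ := by ring
    _ ≤ C ^ (2 * k) * (1 + w) ^ (2 * k) * (Real.exp (C * w))⁻¹ := by gcongr
    _ ≤ Real.exp C * Real.exp (C * w) * (2 * k)! * (Real.exp (C * w))⁻¹ := by gcongr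
    _ = (2 * k)! * Real.exp C := by field_simp

theorem norm_le_sqrt_sum_sq {d : ℕ} (t : Fin d → ℝ) : ‖t‖ ≤ √(∑ i, t i ^ 2) :=
  (pi_norm_le_iff_of_nonneg (Real.sqrt_nonneg _)).mpr fun i => Real.abs_le_sqrt <|
    Finset.single_le_sum (f := fun i => t i ^ 2) (fun _ _ => sq_nonneg _) (mem_univ i)

theorem integrable_exp_neg_mul_rpow_half_sqrt_sum_sq {d : ℕ} {C : ℝ} (hC : 0 < C) :
    Integrable fun t : Fin d → ℝ => Real.exp (-C * √(∑ i, t i ^ 2) ^ ((1 : ℝ) / 2)) := by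
  refine ((integrable_one_add_norm (E := Fin d → ℝ) (μ := volume) (r := d + 1)
    (by simp)).const_mul ((2 * (d + 1))! * Real.exp C / C ^ (2 * (d + 1)))).mono'
    (by fun_prop : Measurable fun t : Fin d → ℝ =>
      Real.exp (-C * √(∑ i, t i ^ 2) ^ ((1 : ℝ) / 2))).aestronglyMeasurable
    (ae_of_all _ fun t => ?_)
  have hw : √(∑ i, t i ^ 2) ^ ((1 : ℝ) / 2) = √√(∑ i, t i ^ 2) := (Real.sqrt_eq_rpow _).symm
  have hpow : (1 + ‖t‖) ^ ((d : ℝ) + 1) = (1 + ‖t‖) ^ (d + 1) := by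
    exact_mod_cast Real.rpow_natCast (1 + ‖t‖) (d + 1)
  rw [Real.norm_eq_abs, abs_of_pos (Real.exp_pos _), Real.rpow_neg (by positivity), hpow,
    ← div_eq_mul_inv, le_div_iff₀ (by positivity), hw, neg_mul, mul_comm]
  calc (1 + ‖t‖) ^ (d + 1) * Real.exp (-(C * √√(∑ i, t i ^ 2)))
      ≤ (1 + √√(∑ i, t i ^ 2) ^ 2) ^ (d + 1) * Real.exp (-(C * √√(∑ i, t i ^ 2))) := by
        rw [Real.sq_sqrt (Real.sqrt_nonneg _)]
        gcongr
        exact norm_le_sqrt_sum_sq t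
    _ ≤ _ := one_add_sq_pow_mul_exp_neg_le hC (Real.sqrt_nonneg _) (d + 1)

theorem norm_empCharFun_le {Ω : Type*} {d : ℕ} (X : ℕ → Ω → Fin d → ℝ) (n : ℕ) (ω : Ω)
    (t : Fin d → ℝ) : ‖empCharFun X n ω t‖ ≤ 1 := by
  rw [empCharFun, norm_mul, norm_inv, Complex.norm_natCast]
  calc _ ≤ (n : ℝ)⁻¹ * ∑ j ∈ range n, (1 : ℝ) := by
        gcongr
        exact (norm_sum_le _ _).trans
          (sum_le_sum fun j _ => (Complex.norm_exp_I_mul_ofReal _).le)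
    _ ≤ 1 := by
        rw [sum_const, card_range, nsmul_one]
        exact inv_mul_le_one

theorem Measurable.charFun {Ω : Type*} [MeasurableSpace Ω] {d : ℕ} {Y : Ω → Fin d → ℝ}
    (hY : Measurable Y) (P : Measure Ω) [SFinite P] :
    Measurable (charFun P Y) :=
  (Measurable.stronglyMeasurable (by fun_prop : Measurable fun p : (Fin d → ℝ) × Ω =>
    Complex.exp (Complex.I * ((∑ k, p.1 k * Y p.2 k : ℝ) : ℂ)))).integral_prod_right'.measurable

section CharFun

variable {Ω : Type*} [MeasurableSpace Ω] {P : Measure Ω} {d : ℕ}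

theorem norm_empCharFun_sub_charFun_le_two [IsProbabilityMeasure P] (X : ℕ → Ω → Fin d → ℝ)
    (n : ℕ) (ω : Ω) (t : Fin d → ℝ) : ‖empCharFun X n ω t - charFun P (X 0) t‖ ≤ 2 := by
  have hchar : ‖charFun P (X 0) t‖ ≤ 1 :=
    (norm_integral_le_of_norm_le_const
      (ae_of_all _ fun ω => (Complex.norm_exp_I_mul_ofReal (∑ k, t k * X 0 ω k)).le)).trans_eq
      (by simp)
  calc _ ≤ ‖empCharFun X n ω t‖ + ‖charFun P (X 0) t‖ := norm_sub_le _ _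
    _ ≤ 1 + 1 := add_le_add (norm_empCharFun_le X n ω t) hchar
    _ = 2 := one_add_one_eq_two

theorem measurable_empCharFun_uncurry {X : ℕ → Ω → Fin d → ℝ} (hmeas : ∀ i, Measurable (X i))
    (n : ℕ) : Measurable fun p : Ω × (Fin d → ℝ) => empCharFun X n p.1 p.2 := by
  unfold empCharFun
  fun_prop

theorem integral_norm_empCharFun_sub_charFun_pow_le [IsProbabilityMeasure P]
    {X : ℕ → Ω → Fin d → ℝ} (hmeas : ∀ i, Measurable (X i)) (hindep : iIndepFun X P)
    (hident : ∀ i, IdentDistrib (X i) (X 0) P P) {n : ℕ} (hn : 0 < n) (m : ℕ)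
    (t : Fin d → ℝ) :
    ∫ ω, ‖empCharFun X n ω t - charFun P (X 0) t‖ ^ m ∂P
      ≤ 2 ^ (m + 2) * m ! * Real.exp (1 / 2) / √n ^ m :=
  integral_norm_mean_sub_integral_pow_le hmeas hindep hident
    (h := fun x => Complex.exp (Complex.I * ((∑ k, t k * x k : ℝ) : ℂ))) (by fun_prop)
    (fun x => (Complex.norm_exp_I_mul_ofReal _).le) hn m

theorem measure_lt_weighted_integral_empCharFun_sub_charFun_le [IsProbabilityMeasure P]
    {X : ℕ → Ω → Fin d → ℝ} (hmeas : ∀ i, Measurable (X i)) (hindep : iIndepFun X P)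
    (hident : ∀ i, IdentDistrib (X i) (X 0) P P) {C : ℝ} (hC : 0 < C) (m : ℕ) {n : ℕ}
    (hn : 0 < n) (c : ℝ) {a : ℝ} (ha : 0 < a) :
    P {ω | a < ∫ t : Fin d → ℝ, ‖empCharFun X n ω (c • t) - charFun P (X 0) (c • t)‖ ^ m
        * Real.exp (-C * √(∑ i, t i ^ 2) ^ ((1 : ℝ) / 2))}
      ≤ ENNReal.ofReal (2 ^ (m + 2) * m ! * Real.exp (1 / 2) / √n ^ m
        * (∫ t : Fin d → ℝ, Real.exp (-C * √(∑ i, t i ^ 2) ^ ((1 : ℝ) / 2))) / a) :=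
  measure_lt_integral_mul_le (K := 2 ^ m)
    ((((measurable_empCharFun_uncurry hmeas n).comp
      (measurable_fst.prodMk (measurable_snd.const_smul c))).sub
      (((hmeas 0).charFun P).comp (measurable_snd.const_smul c))).norm.pow_const m)
    (fun _ _ => by positivity)
    (fun ω t => pow_le_pow_left₀ (norm_nonneg _)
      (norm_empCharFun_sub_charFun_le_two X n ω (c • t)) m)
    (fun t => integral_norm_empCharFun_sub_charFun_pow_le hmeas hindep hident hn m (c • t))
    (by fun_prop) (integrable_exp_neg_mul_rpow_half_sqrt_sum_sq hC)
    (fun _ => (Real.exp_pos _).le) ha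

end CharFun

theorem exists_le_ofReal_mul_rpow_neg_of_le {f : ℕ → ℝ≥0∞} {α β : ℝ}
    (h : ∃ D : ℝ, ∀ n : ℕ, 1 ≤ n → f n ≤ ENNReal.ofReal (D * (n : ℝ) ^ (-α))) (hβ : β ≤ α) :
    ∃ D : ℝ, ∀ n : ℕ, 1 ≤ n → f n ≤ ENNReal.ofReal (D * (n : ℝ) ^ (-β)) := by
  obtain ⟨D, hD⟩ := h
  refine ⟨max D 0, fun n hn => (hD n hn).trans (ENNReal.ofReal_le_ofReal ?_)⟩
  have hn' : (1 : ℝ) ≤ n := by exact_mod_cast hn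
  calc D * (n : ℝ) ^ (-α) ≤ max D 0 * (n : ℝ) ^ (-α) := by gcongr; exact le_max_left D 0
    _ ≤ max D 0 * (n : ℝ) ^ (-β) := by gcongr

theorem stmt_11_general {Ω : Type*} [MeasurableSpace Ω] (P : Measure Ω) [IsProbabilityMeasure P]
    (d : ℕ) (X : ℕ → Ω → (Fin d → ℝ))
    (hmeas : ∀ i, Measurable (X i))
    (hindep : iIndepFun X P)
    (hident : ∀ i, IdentDistrib (X i) (X 0) P P)
    (u ν C : ℝ) (hC : 0 < C)
    (m : ℕ) :
    (∃ D : ℝ, ∀ n : ℕ, 1 ≤ n →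
      P {ω | (n : ℝ) ^ (-(d : ℝ) * (u + 1) - (ν + 3) / 2) <
          ∫ t : Fin d → ℝ,
            ‖empCharFun X n ω ((n : ℝ) ^ (-(1 : ℝ) / 2 + u) • t)
                - charFun P (X 0) ((n : ℝ) ^ (-(1 : ℝ) / 2 + u) • t)‖ ^ m
              * Real.exp (-C * Real.sqrt (∑ i, t i ^ 2) ^ ((1 : ℝ) / 2))}
        ≤ ENNReal.ofReal
            (D * (n : ℝ) ^ (-((m : ℝ) / 2 - (d : ℝ) * (u + 1) - (ν + 3) / 2)))) ∧
    (∀ lam : ℝ, 0 < lam → lam ≤ (m : ℝ) / 2 - (d : ℝ) * (u + 1) - (ν + 3) / 2 →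
      ∃ D' : ℝ, ∀ n : ℕ, 1 ≤ n →
        P {ω | (n : ℝ) ^ (-(d : ℝ) * (u + 1) - (ν + 3) / 2) <
            ∫ t : Fin d → ℝ,
              ‖empCharFun X n ω ((n : ℝ) ^ (-(1 : ℝ) / 2 + u) • t)
                  - charFun P (X 0) ((n : ℝ) ^ (-(1 : ℝ) / 2 + u) • t)‖ ^ m
                * Real.exp (-C * Real.sqrt (∑ i, t i ^ 2) ^ ((1 : ℝ) / 2))}
          ≤ ENNReal.ofReal (D' * (n : ℝ) ^ (-lam))) := by
  refine ⟨?bound, fun lam _ hlam => exists_le_ofReal_mul_rpow_neg_of_le ?bound hlam⟩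
  refine ⟨2 ^ (m + 2) * m ! * Real.exp (1 / 2) *
    ∫ t : Fin d → ℝ, Real.exp (-C * √(∑ i, t i ^ 2) ^ ((1 : ℝ) / 2)), fun n hn => ?_⟩
  have hn' : (0 : ℝ) < n := by exact_mod_cast hn
  refine (measure_lt_weighted_integral_empCharFun_sub_charFun_le hmeas hindep hident hC m hn _
    (Real.rpow_pos_of_pos hn' _)).trans_eq ?_
  have hsqrt : √(n : ℝ) ^ m = (n : ℝ) ^ ((m : ℝ) / 2) := by
    rw [Real.sqrt_eq_rpow, ← Real.rpow_natCast, ← Real.rpow_mul hn'.le]; ring_nf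
  rw [hsqrt, show -((m : ℝ) / 2 - (d : ℝ) * (u + 1) - (ν + 3) / 2)
      = -((m : ℝ) / 2) - (-(d : ℝ) * (u + 1) - (ν + 3) / 2) by ring,
    Real.rpow_sub hn' (-((m : ℝ) / 2)), Real.rpow_neg hn'.le]
  congr 1
  ring

/-- Let `X, X₁, X₂, …` be i.i.d. random vectors in `ℝ^d` whose characteristic
function `χ` satisfies Cramér's condition `limsup_{‖t‖→∞} |χ(t)| < 1`, and
let `χ*ₙ` be the empirical characteristic function.  Fix `u > 0`, `ν > 0`,
`C > 0` and an integer `m ≥ 2`.  Then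
`P( ∫ |χ*ₙ(n^{-1/2+u}t) − χ(n^{-1/2+u}t)|^m exp(−C‖t‖^{1/2}) dt
      > n^{-d(u+1)−(ν+3)/2} ) = O(n^{-(m/2 − d(u+1) − (ν+3)/2)})`;
in particular, for any `λ > 0`, if `m/2 − d(u+1) − (ν+3)/2 ≥ λ` then this
probability is `O(n^{-λ})`. -/
theorem stmt_11 {Ω : Type*} [MeasurableSpace Ω] (P : Measure Ω) [IsProbabilityMeasure P]
    (d : ℕ) (X : ℕ → Ω → (Fin d → ℝ))
    (hmeas : ∀ i, Measurable (X i))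
    (hindep : iIndepFun X P)
    (hident : ∀ i, IdentDistrib (X i) (X 0) P P)
    (hcramer : Filter.limsup (fun t : Fin d → ℝ => ‖charFun P (X 0) t‖)
        (Filter.comap (fun t => Real.sqrt (∑ i, t i ^ 2)) Filter.atTop) < 1)
    (u ν C : ℝ) (hu : 0 < u) (hν : 0 < ν) (hC : 0 < C)
    (m : ℕ) (hm : 2 ≤ m) :
    (∃ D : ℝ, ∀ n : ℕ, 1 ≤ n →
      P {ω | (n : ℝ) ^ (-(d : ℝ) * (u + 1) - (ν + 3) / 2) <
          ∫ t : Fin d → ℝ,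
            ‖empCharFun X n ω ((n : ℝ) ^ (-(1 : ℝ) / 2 + u) • t)
                - charFun P (X 0) ((n : ℝ) ^ (-(1 : ℝ) / 2 + u) • t)‖ ^ m
              * Real.exp (-C * Real.sqrt (∑ i, t i ^ 2) ^ ((1 : ℝ) / 2))}
        ≤ ENNReal.ofReal
            (D * (n : ℝ) ^ (-((m : ℝ) / 2 - (d : ℝ) * (u + 1) - (ν + 3) / 2)))) ∧
    (∀ lam : ℝ, 0 < lam → lam ≤ (m : ℝ) / 2 - (d : ℝ) * (u + 1) - (ν + 3) / 2 →
      ∃ D' : ℝ, ∀ n : ℕ, 1 ≤ n →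
        P {ω | (n : ℝ) ^ (-(d : ℝ) * (u + 1) - (ν + 3) / 2) <
            ∫ t : Fin d → ℝ,
              ‖empCharFun X n ω ((n : ℝ) ^ (-(1 : ℝ) / 2 + u) • t)
                  - charFun P (X 0) ((n : ℝ) ^ (-(1 : ℝ) / 2 + u) • t)‖ ^ m
                * Real.exp (-C * Real.sqrt (∑ i, t i ^ 2) ^ ((1 : ℝ) / 2))}
          ≤ ENNReal.ofReal (D' * (n : ℝ) ^ (-lam))) :=
  stmt_11_general P d X hmeas hindep hident u ν C hC m
end
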